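/- arXiv:1605.03275 — 11 statements merged into one kernel-verified Lean document; each statement's English description precedes it below -/
import Mathlib

section
/- In a triangle ABC, the distance from the circumcenter O to the center N_a of the A-Neuberg circle equals a³/(4S), where S is the area of the triangle; consequently ON_a : ON_b : ON_c = a³ : b³ : c³ and ON_a · ON_b · ON_c = (abc)³/(64S³) = R³. -/
open EuclideanGeometry


private lemma dsq (x y : EuclideanSpace ℝ (Fin 2)) :
    dist x y ^ 2 = (x 0 - y 0) ^ 2 + (x 1 - y 1) ^ 2 := by
  rw [EuclideanSpace.dist_eq, Real.sq_sqrt (by positivity)]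
  simp [Fin.sum_univ_two, Real.dist_eq, sq_abs]

set_option maxHeartbeats 1600000 in
private lemma key (A B C O Na : EuclideanSpace ℝ (Fin 2))
    (a b c S ω : ℝ) (ha : a = dist B C) (hb : b = dist C A) (hc : c = dist A B)
    (hS : 0 < S)
    (hHeron : 16 * S ^ 2 =
      2 * a ^ 2 * b ^ 2 + 2 * b ^ 2 * c ^ 2 + 2 * c ^ 2 * a ^ 2 - a ^ 4 - b ^ 4 - c ^ 4)
    (hω : ω ∈ Set.Ioo 0 (Real.pi / 2))
    (htan : Real.tan ω = 4 * S / (a ^ 2 + b ^ 2 + c ^ 2))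
    (hOBC : dist O B = dist O C) (hOA : dist O A = dist O B)
    (hNaBC : dist Na B = dist Na C) (hang : ∠ B Na C = 2 * ω)
    (hside : (affineSpan ℝ ({B, C} : Set (EuclideanSpace ℝ (Fin 2)))).SSameSide Na A) :
    dist O Na = a ^ 3 / (4 * S) ∧ a * b * c = 4 * S * dist O B := by
  obtain ⟨hω0, hω2⟩ := hω
  have ha0 : (0:ℝ) ≤ a := ha ▸ dist_nonneg
  have hb0 : (0:ℝ) ≤ b := hb ▸ dist_nonneg
  have hc0 : (0:ℝ) ≤ c := hc ▸ dist_nonneg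
  have hap : 0 < a := by
    rcases ha0.eq_or_lt with h | h
    · exfalso
      rw [← h] at hHeron
      nlinarith [sq_nonneg (b^2 - c^2)]
    · exact h
  have hbp : 0 < b := by
    rcases hb0.eq_or_lt with h | h
    · exfalso
      rw [← h] at hHeron
      nlinarith [sq_nonneg (a^2 - c^2)]
    · exact h
  have hcp : 0 < c := by
    rcases hc0.eq_or_lt with h | h
    · exfalso
      rw [← h] at hHeron
      nlinarith [sq_nonneg (a^2 - b^2)]
    · exact h
  have hK : 0 < a^2 + b^2 + c^2 := by positivity
  have ha2 : a ^ 2 = (C 0 - B 0)^2 + (C 1 - B 1)^2 := by rw [ha, dsq]; ring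
  have hb2 : b ^ 2 = (C 0 - A 0)^2 + (C 1 - A 1)^2 := by rw [hb, dsq]
  have hc2 : c ^ 2 = (A 0 - B 0)^2 + (A 1 - B 1)^2 := by rw [hc, dsq]
  have hQO : ((O 0 - (B 0 + C 0)/2)*(C 0 - B 0) + (O 1 - (B 1 + C 1)/2)*(C 1 - B 1)) = 0 := by
    have h1 : dist O B ^ 2 = dist O C ^ 2 := by rw [hOBC]
    rw [dsq, dsq] at h1
    linear_combination h1 / 2
  have hQNa : ((Na 0 - (B 0 + C 0)/2)*(C 0 - B 0) + (Na 1 - (B 1 + C 1)/2)*(C 1 - B 1)) = 0 := by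
    have h1 : dist Na B ^ 2 = dist Na C ^ 2 := by rw [hNaBC]
    rw [dsq, dsq] at h1
    linear_combination h1 / 2
  have e1 : (-(A 0 - B 0) * (C 1 - B 1) + (A 1 - B 1) * (C 0 - B 0))^2 = ((A 0 - (B 0 + C 0)/2)^2 + (A 1 - (B 1 + C 1)/2)^2) * a^2 - ((A 0 - (B 0 + C 0)/2)*(C 0 - B 0) + (A 1 - (B 1 + C 1)/2)*(C 1 - B 1))^2 := by
    linear_combination (-((A 0 - (B 0 + C 0)/2)^2 + (A 1 - (B 1 + C 1)/2)^2)) * ha2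
  have hQA : 2 * ((A 0 - (B 0 + C 0)/2)*(C 0 - B 0) + (A 1 - (B 1 + C 1)/2)*(C 1 - B 1)) = c^2 - b^2 := by linear_combination hb2 - hc2
  have hAM : 4 * ((A 0 - (B 0 + C 0)/2)^2 + (A 1 - (B 1 + C 1)/2)^2) = 2*b^2 + 2*c^2 - a^2 := by
    linear_combination (-2)*hb2 - 2*hc2 + ha2
  have hq2 : (-(A 0 - B 0) * (C 1 - B 1) + (A 1 - B 1) * (C 0 - B 0))^2 = 4 * S^2 := by
    linear_combination e1 + (a^2/4)*hAM - ((2*((A 0 - (B 0 + C 0)/2)*(C 0 - B 0) + (A 1 - (B 1 + C 1)/2)*(C 1 - B 1)) + c^2 - b^2)/4)*hQA - hHeron/4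
  have hOA2 : (O 0 - A 0)^2 + (O 1 - A 1)^2 = (O 0 - B 0)^2 + (O 1 - B 1)^2 := by
    have h1 : dist O A ^ 2 = dist O B ^ 2 := by rw [hOA]
    rw [dsq, dsq] at h1; exact h1
  have e5 : 2 * ((O 0 - (B 0 + C 0)/2)*(A 0 - (B 0 + C 0)/2) + (O 1 - (B 1 + C 1)/2)*(A 1 - (B 1 + C 1)/2)) = ((A 0 - (B 0 + C 0)/2)^2 + (A 1 - (B 1 + C 1)/2)^2) - ((C 0 - B 0)^2 + (C 1 - B 1)^2)/4 := by
    linear_combination -hOA2 - hQO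
  have e4 : (-(O 0 - B 0) * (C 1 - B 1) + (O 1 - B 1) * (C 0 - B 0)) * (-(A 0 - B 0) * (C 1 - B 1) + (A 1 - B 1) * (C 0 - B 0)) = ((O 0 - (B 0 + C 0)/2)*(A 0 - (B 0 + C 0)/2) + (O 1 - (B 1 + C 1)/2)*(A 1 - (B 1 + C 1)/2)) * a^2 := by
    linear_combination (-((A 0 - (B 0 + C 0)/2)*(C 0 - B 0) + (A 1 - (B 1 + C 1)/2)*(C 1 - B 1)))*hQO - ((O 0 - (B 0 + C 0)/2)*(A 0 - (B 0 + C 0)/2) + (O 1 - (B 1 + C 1)/2)*(A 1 - (B 1 + C 1)/2))*ha2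
  have htq : 4 * ((-(O 0 - B 0) * (C 1 - B 1) + (O 1 - B 1) * (C 0 - B 0)) * (-(A 0 - B 0) * (C 1 - B 1) + (A 1 - B 1) * (C 0 - B 0))) = a^2 * (b^2 + c^2 - a^2) := by
    linear_combination 4*e4 + 2*a^2*e5 + (a^2/2)*hAM + (a^2/2)*ha2
  have f1 : (-(Na 0 - B 0) * (C 1 - B 1) + (Na 1 - B 1) * (C 0 - B 0))^2 = ((Na 0 - (B 0 + C 0)/2)^2 + (Na 1 - (B 1 + C 1)/2)^2) * a^2 := by
    linear_combination (-((Na 0 - (B 0 + C 0)/2)^2 + (Na 1 - (B 1 + C 1)/2)^2))*ha2 - ((Na 0 - (B 0 + C 0)/2)*(C 0 - B 0) + (Na 1 - (B 1 + C 1)/2)*(C 1 - B 1))*hQNa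
  have hNaB2 : dist Na B ^ 2 = (Na 0 - B 0)^2 + (Na 1 - B 1)^2 := dsq Na B
  have f2 : 4*(a^2 * dist Na B ^2) = 4*(-(Na 0 - B 0) * (C 1 - B 1) + (Na 1 - B 1) * (C 0 - B 0))^2 + a^4 := by
    linear_combination 4*a^2*hNaB2 - 4*f1 + 4*a^2*hQNa - a^2*ha2
  have f3 : 4*a^2*((B 0 - Na 0)*(C 0 - Na 0) + (B 1 - Na 1)*(C 1 - Na 1)) = 4*(-(Na 0 - B 0) * (C 1 - B 1) + (Na 1 - B 1) * (C 0 - B 0))^2 - a^4 := by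
    linear_combination -4*f1 + a^2*ha2
  have hI : (B 0 - Na 0)*(C 0 - Na 0) + (B 1 - Na 1)*(C 1 - Na 1)
      = Real.cos (2*ω) * (dist Na B * dist Na B) := by
    have hcm := InnerProductGeometry.cos_angle_mul_norm_mul_norm (B -ᵥ Na) (C -ᵥ Na)
    rw [show InnerProductGeometry.angle (B -ᵥ Na) (C -ᵥ Na) = ∠ B Na C from rfl, hang] at hcm
    have hin : (inner ℝ (B -ᵥ Na) (C -ᵥ Na) : ℝ)
        = (B 0 - Na 0)*(C 0 - Na 0) + (B 1 - Na 1)*(C 1 - Na 1) := by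
      simp [PiLp.inner_apply, Fin.sum_univ_two, vsub_eq_sub]
      ring
    rw [hin] at hcm
    rw [← hcm]
    have h2 : dist Na B = ‖B -ᵥ Na‖ := by
      rw [dist_comm]; exact dist_eq_norm_vsub (EuclideanSpace ℝ (Fin 2)) B Na
    have hbc : ‖C -ᵥ Na‖ = ‖B -ᵥ Na‖ := by
      rw [← dist_eq_norm_vsub (EuclideanSpace ℝ (Fin 2)),
        ← dist_eq_norm_vsub (EuclideanSpace ℝ (Fin 2)), dist_comm C Na, dist_comm B Na]
      exact hNaBC.symm
    rw [h2, hbc]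
  have hc2p : Real.cos (2*ω) * (4*(-(Na 0 - B 0) * (C 1 - B 1) + (Na 1 - B 1) * (C 0 - B 0))^2 + a^4) = 4*(-(Na 0 - B 0) * (C 1 - B 1) + (Na 1 - B 1) * (C 0 - B 0))^2 - a^4 := by
    linear_combination (-(Real.cos (2*ω)))*f2 + f3 - 4*a^2*hI
  have hcosne : Real.cos ω ≠ 0 :=
    (Real.cos_pos_of_mem_Ioo ⟨by linarith [Real.pi_pos], hω2⟩).ne'
  have h1T : Real.cos ω^2 * (1 + Real.tan ω^2) = 1 := by
    rw [← Real.inv_one_add_tan_sq hcosne]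
    field_simp
  have hc2T : Real.cos (2*ω) * (1 + Real.tan ω^2) = 1 - Real.tan ω^2 := by
    rw [Real.cos_two_mul]; linear_combination 2*h1T
  have h4p : 4*((-(Na 0 - B 0) * (C 1 - B 1) + (Na 1 - B 1) * (C 0 - B 0))^2 * Real.tan ω^2) = a^4 := by
    linear_combination (-(1 + Real.tan ω^2)*hc2p + (4*(-(Na 0 - B 0) * (C 1 - B 1) + (Na 1 - B 1) * (C 0 - B 0))^2 + a^4)*hc2T)/2
  have hT2 : Real.tan ω * (a^2 + b^2 + c^2) = 4*S := by
    rw [htan]; field_simp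
  have hp2 : 64*((-(Na 0 - B 0) * (C 1 - B 1) + (Na 1 - B 1) * (C 0 - B 0))^2 * S^2) = a^4 * (a^2 + b^2 + c^2)^2 := by
    linear_combination (a^2+b^2+c^2)^2*h4p - 4*(-(Na 0 - B 0) * (C 1 - B 1) + (Na 1 - B 1) * (C 0 - B 0))^2*(Real.tan ω*(a^2+b^2+c^2) + 4*S)*hT2
  have hppos : 0 < (-(Na 0 - B 0) * (C 1 - B 1) + (Na 1 - B 1) * (C 0 - B 0))^2 := by
    rcases (sq_nonneg (-(Na 0 - B 0) * (C 1 - B 1) + (Na 1 - B 1) * (C 0 - B 0))).eq_or_lt with h | h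
    · exfalso
      have hx : (0:ℝ) < a^4*(a^2+b^2+c^2)^2 := by positivity
      rw [← hp2, ← h] at hx
      norm_num at hx
    · exact h
  have hqpos : 0 < (-(A 0 - B 0) * (C 1 - B 1) + (A 1 - B 1) * (C 0 - B 0))^2 := by
    rcases (sq_nonneg (-(A 0 - B 0) * (C 1 - B 1) + (A 1 - B 1) * (C 0 - B 0))).eq_or_lt with h | h
    · exfalso
      have hx : (0:ℝ) < 4*S^2 := by positivity
      rw [← hq2, ← h] at hx
      norm_num at hx
    · exact h
  -- the same-side condition gives the sign
  obtain ⟨⟨p₁, hp₁, p₂, hp₂, hray⟩, hNs, hAs⟩ := hside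
  have hv1 : p₁ -ᵥ B ∈ vectorSpan ℝ ({B, C} : Set (EuclideanSpace ℝ (Fin 2))) := by
    rw [← direction_affineSpan]
    exact AffineSubspace.vsub_mem_direction hp₁ (left_mem_affineSpan_pair ℝ B C)
  obtain ⟨r₁, hr₁⟩ := mem_vectorSpan_pair_rev.mp hv1
  have h10 : p₁ 0 = r₁ * (C 0 - B 0) + B 0 := by
    have h := congrArg (· 0) hr₁
    simp [vsub_eq_sub] at h
    linarith [h]
  have h11 : p₁ 1 = r₁ * (C 1 - B 1) + B 1 := by
    have h := congrArg (· 1) hr₁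
    simp [vsub_eq_sub] at h
    linarith [h]
  have hv2 : p₂ -ᵥ B ∈ vectorSpan ℝ ({B, C} : Set (EuclideanSpace ℝ (Fin 2))) := by
    rw [← direction_affineSpan]
    exact AffineSubspace.vsub_mem_direction hp₂ (left_mem_affineSpan_pair ℝ B C)
  obtain ⟨r₂, hr₂⟩ := mem_vectorSpan_pair_rev.mp hv2
  have h20 : p₂ 0 = r₂ * (C 0 - B 0) + B 0 := by
    have h := congrArg (· 0) hr₂
    simp [vsub_eq_sub] at h
    linarith [h]
  have h21 : p₂ 1 = r₂ * (C 1 - B 1) + B 1 := by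
    have h := congrArg (· 1) hr₂
    simp [vsub_eq_sub] at h
    linarith [h]
  have hLNa : -(Na 0 - p₁ 0)*(C 1 - B 1) + (Na 1 - p₁ 1)*(C 0 - B 0) = (-(Na 0 - B 0) * (C 1 - B 1) + (Na 1 - B 1) * (C 0 - B 0)) := by
    linear_combination (C 1 - B 1)*h10 - (C 0 - B 0)*h11
  have hLA : -(A 0 - p₂ 0)*(C 1 - B 1) + (A 1 - p₂ 1)*(C 0 - B 0) = (-(A 0 - B 0) * (C 1 - B 1) + (A 1 - B 1) * (C 0 - B 0)) := by
    linear_combination (C 1 - B 1)*h20 - (C 0 - B 0)*h21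
  have hvne1 : Na -ᵥ p₁ ≠ 0 := by
    intro hz
    have hz0 : Na 0 - p₁ 0 = 0 := by
      have := congrArg (· 0) hz; simpa [vsub_eq_sub] using this
    have hz1 : Na 1 - p₁ 1 = 0 := by
      have := congrArg (· 1) hz; simpa [vsub_eq_sub] using this
    have : (-(Na 0 - B 0) * (C 1 - B 1) + (Na 1 - B 1) * (C 0 - B 0)) = 0 := by
      linear_combination -hLNa - (C 1 - B 1)*hz0 + (C 0 - B 0)*hz1
    rw [this] at hppos
    norm_num at hppos
  have hvne2 : A -ᵥ p₂ ≠ 0 := by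
    intro hz
    have hz0 : A 0 - p₂ 0 = 0 := by
      have := congrArg (· 0) hz; simpa [vsub_eq_sub] using this
    have hz1 : A 1 - p₂ 1 = 0 := by
      have := congrArg (· 1) hz; simpa [vsub_eq_sub] using this
    have : (-(A 0 - B 0) * (C 1 - B 1) + (A 1 - B 1) * (C 0 - B 0)) = 0 := by
      linear_combination -hLA - (C 1 - B 1)*hz0 + (C 0 - B 0)*hz1
    rw [this] at hqpos
    norm_num at hqpos
  obtain ⟨s₁, s₂, hs₁, hs₂, hsmul⟩ := hray.exists_pos hvne1 hvne2
  have hs0 : s₁ * (Na 0 - p₁ 0) = s₂ * (A 0 - p₂ 0) := by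
    have := congrArg (· 0) hsmul; simpa [vsub_eq_sub] using this
  have hs1 : s₁ * (Na 1 - p₁ 1) = s₂ * (A 1 - p₂ 1) := by
    have := congrArg (· 1) hsmul; simpa [vsub_eq_sub] using this
  have hrpq : s₁ * (-(Na 0 - B 0) * (C 1 - B 1) + (Na 1 - B 1) * (C 0 - B 0)) = s₂ * (-(A 0 - B 0) * (C 1 - B 1) + (A 1 - B 1) * (C 0 - B 0)) := by
    linear_combination (-s₁)*hLNa + s₂*hLA - (C 1 - B 1)*hs0 + (C 0 - B 0)*hs1
  have hpq : 0 < (-(Na 0 - B 0) * (C 1 - B 1) + (Na 1 - B 1) * (C 0 - B 0)) * (-(A 0 - B 0) * (C 1 - B 1) + (A 1 - B 1) * (C 0 - B 0)) := by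
    have hkey : s₂ * ((-(Na 0 - B 0) * (C 1 - B 1) + (Na 1 - B 1) * (C 0 - B 0)) * (-(A 0 - B 0) * (C 1 - B 1) + (A 1 - B 1) * (C 0 - B 0))) = s₁ * (-(Na 0 - B 0) * (C 1 - B 1) + (Na 1 - B 1) * (C 0 - B 0))^2 := by linear_combination (-(-(Na 0 - B 0) * (C 1 - B 1) + (Na 1 - B 1) * (C 0 - B 0)))*hrpq
    have hx : 0 < s₂ * ((-(Na 0 - B 0) * (C 1 - B 1) + (Na 1 - B 1) * (C 0 - B 0)) * (-(A 0 - B 0) * (C 1 - B 1) + (A 1 - B 1) * (C 0 - B 0))) := by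
      rw [hkey]; exact mul_pos hs₁ hppos
    exact (mul_pos_iff_of_pos_left hs₂).mp hx
  have hsq4 : (4*((-(Na 0 - B 0) * (C 1 - B 1) + (Na 1 - B 1) * (C 0 - B 0)) * (-(A 0 - B 0) * (C 1 - B 1) + (A 1 - B 1) * (C 0 - B 0))))^2 = (a^2*(a^2+b^2+c^2))^2 := by
    linear_combination 16*(-(Na 0 - B 0) * (C 1 - B 1) + (Na 1 - B 1) * (C 0 - B 0))^2*hq2 + hp2
  have hpqv : 4*((-(Na 0 - B 0) * (C 1 - B 1) + (Na 1 - B 1) * (C 0 - B 0)) * (-(A 0 - B 0) * (C 1 - B 1) + (A 1 - B 1) * (C 0 - B 0))) = a^2*(a^2+b^2+c^2) := by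
    have h1 : (0:ℝ) ≤ 4*((-(Na 0 - B 0) * (C 1 - B 1) + (Na 1 - B 1) * (C 0 - B 0)) * (-(A 0 - B 0) * (C 1 - B 1) + (A 1 - B 1) * (C 0 - B 0))) := by linarith
    have h2 : (0:ℝ) ≤ a^2*(a^2+b^2+c^2) := by positivity
    calc 4*((-(Na 0 - B 0) * (C 1 - B 1) + (Na 1 - B 1) * (C 0 - B 0)) * (-(A 0 - B 0) * (C 1 - B 1) + (A 1 - B 1) * (C 0 - B 0))) = Real.sqrt ((4*((-(Na 0 - B 0) * (C 1 - B 1) + (Na 1 - B 1) * (C 0 - B 0)) * (-(A 0 - B 0) * (C 1 - B 1) + (A 1 - B 1) * (C 0 - B 0))))^2) := (Real.sqrt_sq h1).symm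
    _ = Real.sqrt ((a^2*(a^2+b^2+c^2))^2) := by rw [hsq4]
    _ = a^2*(a^2+b^2+c^2) := Real.sqrt_sq h2
  -- final distance computation
  have hdONc : dist O Na ^ 2 = (O 0 - Na 0)^2 + (O 1 - Na 1)^2 := dsq O Na
  have g1 : a^2 * dist O Na ^2 = ((-(O 0 - B 0) * (C 1 - B 1) + (O 1 - B 1) * (C 0 - B 0)) - (-(Na 0 - B 0) * (C 1 - B 1) + (Na 1 - B 1) * (C 0 - B 0)))^2 := by
    linear_combination a^2*hdONc + ((O 0 - Na 0)^2 + (O 1 - Na 1)^2)*ha2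
      + (((O 0 - (B 0 + C 0)/2)*(C 0 - B 0) + (O 1 - (B 1 + C 1)/2)*(C 1 - B 1)) - ((Na 0 - (B 0 + C 0)/2)*(C 0 - B 0) + (Na 1 - (B 1 + C 1)/2)*(C 1 - B 1)))*hQO - (((O 0 - (B 0 + C 0)/2)*(C 0 - B 0) + (O 1 - (B 1 + C 1)/2)*(C 1 - B 1)) - ((Na 0 - (B 0 + C 0)/2)*(C 0 - B 0) + (Na 1 - (B 1 + C 1)/2)*(C 1 - B 1)))*hQNa
  have g2 : 4*(((-(O 0 - B 0) * (C 1 - B 1) + (O 1 - B 1) * (C 0 - B 0)) - (-(Na 0 - B 0) * (C 1 - B 1) + (Na 1 - B 1) * (C 0 - B 0))) * (-(A 0 - B 0) * (C 1 - B 1) + (A 1 - B 1) * (C 0 - B 0))) = -2*a^4 := by linear_combination htq - hpqv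
  have g3 : 16*(S^2*((-(O 0 - B 0) * (C 1 - B 1) + (O 1 - B 1) * (C 0 - B 0)) - (-(Na 0 - B 0) * (C 1 - B 1) + (Na 1 - B 1) * (C 0 - B 0)))^2) = a^8 := by
    linear_combination ((4*(((-(O 0 - B 0) * (C 1 - B 1) + (O 1 - B 1) * (C 0 - B 0)) - (-(Na 0 - B 0) * (C 1 - B 1) + (Na 1 - B 1) * (C 0 - B 0))) * (-(A 0 - B 0) * (C 1 - B 1) + (A 1 - B 1) * (C 0 - B 0))) - 2*a^4)/4)*g2 - 4*((-(O 0 - B 0) * (C 1 - B 1) + (O 1 - B 1) * (C 0 - B 0)) - (-(Na 0 - B 0) * (C 1 - B 1) + (Na 1 - B 1) * (C 0 - B 0)))^2*hq2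
  have g4 : (4*S)^2*(a^2 * dist O Na ^2) = a^8 := by
    linear_combination 16*S^2*g1 + g3
  have h5a : a^2 * (dist O Na ^2 * (16*S^2)) = a^2 * a^6 := by linear_combination g4
  have h5b : dist O Na ^2 * (16*S^2) = a^6 :=
    mul_left_cancel₀ (pow_ne_zero 2 hap.ne') h5a
  have h5 : dist O Na ^2 = (a^3/(4*S))^2 := by
    field_simp
    linear_combination h5b
  have hfin1 : dist O Na = a^3/(4*S) := by
    have hge : (0:ℝ) ≤ a^3/(4*S) := by positivity
    rw [← Real.sqrt_sq dist_nonneg, h5, Real.sqrt_sq hge]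
  -- circumradius relation
  have m1 : (-(O 0 - B 0) * (C 1 - B 1) + (O 1 - B 1) * (C 0 - B 0))^2 = ((O 0 - (B 0 + C 0)/2)^2 + (O 1 - (B 1 + C 1)/2)^2) * a^2 := by
    linear_combination (-((O 0 - (B 0 + C 0)/2)^2 + (O 1 - (B 1 + C 1)/2)^2))*ha2 - ((O 0 - (B 0 + C 0)/2)*(C 0 - B 0) + (O 1 - (B 1 + C 1)/2)*(C 1 - B 1))*hQO
  have hOB2 : dist O B ^2 = (O 0 - B 0)^2 + (O 1 - B 1)^2 := dsq O B
  have m2 : 4*(a^2 * dist O B ^2) = 4*(-(O 0 - B 0) * (C 1 - B 1) + (O 1 - B 1) * (C 0 - B 0))^2 + a^4 := by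
    linear_combination 4*a^2*hOB2 - 4*m1 + 4*a^2*hQO - a^2*ha2
  have m3 : 64*(S^2*(-(O 0 - B 0) * (C 1 - B 1) + (O 1 - B 1) * (C 0 - B 0))^2) = a^4*(b^2+c^2-a^2)^2 := by
    linear_combination (4*(-(O 0 - B 0) * (C 1 - B 1) + (O 1 - B 1) * (C 0 - B 0))*(-(A 0 - B 0) * (C 1 - B 1) + (A 1 - B 1) * (C 0 - B 0)) + a^2*(b^2+c^2-a^2))*htq - 16*(-(O 0 - B 0) * (C 1 - B 1) + (O 1 - B 1) * (C 0 - B 0))^2*hq2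
  have m4a : 16*a^2*((4*S*dist O B)^2) = 16*a^2*((a*b*c)^2) := by
    linear_combination 64*S^2*m2 + 4*m3 + 4*a^4*hHeron
  have m4 : (4*S*dist O B)^2 = (a*b*c)^2 := by
    have h16 : (16*a^2 : ℝ) ≠ 0 := by positivity
    have := mul_left_cancel₀ h16 m4a
    exact this
  have hfin2 : a*b*c = 4*S*dist O B := by
    have h1 : (0:ℝ) ≤ a*b*c := by positivity
    have h2 : (0:ℝ) ≤ 4*S*dist O B := by positivity
    calc a*b*c = Real.sqrt ((a*b*c)^2) := (Real.sqrt_sq h1).symm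
    _ = Real.sqrt ((4*S*dist O B)^2) := by rw [m4]
    _ = 4*S*dist O B := Real.sqrt_sq h2
  exact ⟨hfin1, hfin2⟩

/-- In a triangle `ABC` with circumcenter `O`, area `S` (given by Heron's formula)
and Brocard angle `ω`, the distance from `O` to the center `Nₐ` of the A-Neuberg
circle is `a³/(4S)` (and cyclically), so `ONₐ : ON_b : ON_c = a³ : b³ : c³` and
`ONₐ · ON_b · ON_c = R³`. -/
theorem stmt_4 (A B C O Na Nb Nc : EuclideanSpace ℝ (Fin 2))
    (hABC : AffineIndependent ℝ ![A, B, C])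
    (a b c R S ω : ℝ) (ha : a = dist B C) (hb : b = dist C A) (hc : c = dist A B)
    (hR : 0 < R) (hO : dist O A = R ∧ dist O B = R ∧ dist O C = R)
    (hS : 0 < S)
    (hHeron : 16 * S ^ 2 =
      2 * a ^ 2 * b ^ 2 + 2 * b ^ 2 * c ^ 2 + 2 * c ^ 2 * a ^ 2 - a ^ 4 - b ^ 4 - c ^ 4)
    (hω : ω ∈ Set.Ioo 0 (Real.pi / 2))
    (htan : Real.tan ω = 4 * S / (a ^ 2 + b ^ 2 + c ^ 2))
    (hNa : dist Na B = dist Na C ∧ ∠ B Na C = 2 * ω ∧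
      (affineSpan ℝ ({B, C} : Set (EuclideanSpace ℝ (Fin 2)))).SSameSide Na A)
    (hNb : dist Nb C = dist Nb A ∧ ∠ C Nb A = 2 * ω ∧
      (affineSpan ℝ ({C, A} : Set (EuclideanSpace ℝ (Fin 2)))).SSameSide Nb B)
    (hNc : dist Nc A = dist Nc B ∧ ∠ A Nc B = 2 * ω ∧
      (affineSpan ℝ ({A, B} : Set (EuclideanSpace ℝ (Fin 2)))).SSameSide Nc C) :
    dist O Na = a ^ 3 / (4 * S) ∧ dist O Nb = b ^ 3 / (4 * S) ∧
    dist O Nc = c ^ 3 / (4 * S) ∧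
    dist O Na * dist O Nb * dist O Nc = R ^ 3 := by
  obtain ⟨hOA, hOB, hOC⟩ := hO
  have k1 := key A B C O Na a b c S ω ha hb hc hS hHeron hω htan
    (by rw [hOB, hOC]) (by rw [hOA, hOB]) hNa.1 hNa.2.1 hNa.2.2
  have k2 := key B C A O Nb b c a S ω hb hc ha hS (by linarith) hω
    (by rw [htan]; ring_nf)
    (by rw [hOC, hOA]) (by rw [hOB, hOC]) hNb.1 hNb.2.1 hNb.2.2
  have k3 := key C A B O Nc c a b S ω hc ha hb hS (by linarith) hω
    (by rw [htan]; ring_nf)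
    (by rw [hOA, hOB]) (by rw [hOC, hOA]) hNc.1 hNc.2.1 hNc.2.2
  refine ⟨k1.1, k2.1, k3.1, ?_⟩
  have habc : a * b * c = 4 * S * R := by rw [← hOB]; exact k1.2
  have hcube : (a * b * c)^3 = (4 * S * R)^3 := by rw [habc]
  rw [k1.1, k2.1, k3.1]
  have hSne : S ≠ 0 := hS.ne'
  field_simp
  linear_combination hcube
end

section
/- If ABC is a triangle right-angled at A, then the B-Neuberg circle and the C-Neuberg circle of ABC are orthogonal, i.e., n_b² + n_c² = N_bN_c², where N_b, N_c are the centers and n_b, n_c the radii of these circles. -/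
/-!
Place the origin at `A` and write `u = B - A`, `v = C - A`, which are orthogonal. The center of
the `B`-Neuberg circle is the apex of an isosceles triangle on the chord `CA` with apex angle `2ω`,
on the side of `B`; its height over the chord is `(b/2) cot ω`, so
`N_b - A = v/2 + (b cot ω / 2c) u`, and symmetrically `N_c - A = u/2 + (c cot ω / 2b) v`.
Pythagoras gives `N_bN_c² = ((b - c cot ω)² + (b cot ω - c)²)/4`, which equals
`n_b² + n_c² = (b² + c²)(cot² ω - 3)/4` precisely because `cot ω = (b² + c²)/(bc)` at a right
angle.
-/

open AffineSubspace EuclideanGeometry Module Real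
open scoped RealInnerProductSpace

theorem norm_smul_add_smul_sq_of_inner_eq_zero {V : Type*} [NormedAddCommGroup V]
    [InnerProductSpace ℝ V] {u v : V} (huv : ⟪u, v⟫ = 0) (α β : ℝ) :
    ‖α • u + β • v‖ ^ 2 = α ^ 2 * ‖u‖ ^ 2 + β ^ 2 * ‖v‖ ^ 2 := by
  simp [norm_add_sq_real, norm_smul, mul_pow, real_inner_smul_left, real_inner_smul_right, huv]

theorem eq_smul_add_smul_of_inner_eq_zero {V : Type*} [NormedAddCommGroup V]
    [InnerProductSpace ℝ V] (hV : finrank ℝ V = 2) {u v : V} (hu : u ≠ 0) (hv : v ≠ 0)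
    (huv : ⟪u, v⟫ = 0) (w : V) :
    w = (⟪w, u⟫ / ‖u‖ ^ 2) • u + (⟪w, v⟫ / ‖v‖ ^ 2) • v := by
  set x := w - ((⟪w, u⟫ / ‖u‖ ^ 2) • u + (⟪w, v⟫ / ‖v‖ ^ 2) • v)
  have hu2 : ‖u‖ ^ 2 ≠ 0 := by positivity
  have hv2 : ‖v‖ ^ 2 ≠ 0 := by positivity
  have hxu : ⟪u, x⟫ = 0 := by
    simp only [x, inner_sub_right, inner_add_right, inner_smul_right, real_inner_self_eq_norm_sq,
      huv, real_inner_comm u w]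
    field_simp
    ring
  have hxv : ⟪v, x⟫ = 0 := by
    simp only [x, inner_sub_right, inner_add_right, inner_smul_right, real_inner_self_eq_norm_sq,
      real_inner_comm u v ▸ huv, real_inner_comm v w]
    field_simp
    ring
  have : FiniteDimensional ℝ V := .of_finrank_eq_succ hV
  by_contra hw
  have hx : x ≠ 0 := fun h => hw (sub_eq_zero.1 h)
  -- `u`, `v`, `x` would be three pairwise orthogonal nonzero vectors in a plane
  have hind : LinearIndependent ℝ ![u, v, x] := by
    refine linearIndependent_of_ne_zero_of_inner_eq_zero (fun i => ?_) fun i j hij => ?_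
    · fin_cases i <;> assumption
    · fin_cases i <;> fin_cases j <;> simp_all [real_inner_comm]
  simpa [hV] using hind.fintype_card_le_finrank

theorem pos_of_vsub_eq_smul_add_smul_of_sSameSide {k V P : Type*} [Field k] [LinearOrder k]
    [IsStrictOrderedRing k] [AddCommGroup V] [Module k V] [AddTorsor V P]
    {p₀ p₁ p₂ c : P} {α β : k} (hc : c -ᵥ p₀ = α • (p₁ -ᵥ p₀) + β • (p₂ -ᵥ p₀))
    (hside : line[k, p₁, p₀].SSameSide c p₂) : 0 < β := by
  have hfoot : α • (p₁ -ᵥ p₀) +ᵥ p₀ ∈ line[k, p₁, p₀] :=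
    smul_vsub_rev_vadd_mem_affineSpan_pair α p₁ p₀
  have hc' : c = β • (p₂ -ᵥ p₀) +ᵥ (α • (p₁ -ᵥ p₀) +ᵥ p₀) := by
    rw [vadd_vadd, add_comm, ← hc, vsub_vadd]
  rcases lt_trichotomy β 0 with hβ | hβ | hβ
  · refine absurd ?_ hside.not_sOppSide
    rw [hc']
    exact sOppSide_smul_vsub_vadd_left hside.right_notMem
      (right_mem_affineSpan_pair k p₁ p₀) hfoot hβ
  · refine absurd ?_ hside.left_notMem
    rwa [hc', hβ, zero_smul, zero_vadd]
  · exact hβ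

section Euclidean

variable {V P : Type*} [NormedAddCommGroup V] [InnerProductSpace ℝ V] [MetricSpace P]
  [NormedAddTorsor V P]

theorem dist_sq_eq_four_mul_sin_sq_of_dist_eq_of_angle_eq_two_mul {p₀ p₁ c : P} {ω : ℝ}
    (hdist : dist c p₁ = dist c p₀) (hangle : ∠ p₁ c p₀ = 2 * ω) :
    dist p₁ p₀ ^ 2 = 4 * sin ω ^ 2 * dist c p₀ ^ 2 := by
  have hcos := law_cos p₁ c p₀
  rw [hangle, cos_two_mul, cos_sq', dist_comm p₁ c, dist_comm p₀ c, hdist] at hcos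
  linear_combination hcos

theorem vsub_eq_of_dist_eq_of_angle_eq_two_mul (hV : finrank ℝ V = 2) {p₀ p₁ p₂ c : P} {ω : ℝ}
    (hω : ω ∈ Set.Ioo 0 (π / 2)) (hp₁ : p₁ ≠ p₀) (hperp : ⟪p₁ -ᵥ p₀, p₂ -ᵥ p₀⟫ = 0)
    (hdist : dist c p₁ = dist c p₀) (hangle : ∠ p₁ c p₀ = 2 * ω)
    (hside : line[ℝ, p₁, p₀].SSameSide c p₂) :
    c -ᵥ p₀ = (1 / 2 : ℝ) • (p₁ -ᵥ p₀) + (cot ω * dist p₁ p₀ / (2 * dist p₂ p₀)) • (p₂ -ᵥ p₀) := by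
  have hp₂ : p₂ ≠ p₀ := fun h => hside.right_notMem (h ▸ right_mem_affineSpan_pair ℝ p₁ p₀)
  have hu : 0 < ‖p₁ -ᵥ p₀‖ := norm_pos_iff.2 (vsub_ne_zero.2 hp₁)
  have hv : 0 < ‖p₂ -ᵥ p₀‖ := norm_pos_iff.2 (vsub_ne_zero.2 hp₂)
  have hdecomp := eq_smul_add_smul_of_inner_eq_zero hV (vsub_ne_zero.2 hp₁) (vsub_ne_zero.2 hp₂)
    hperp (c -ᵥ p₀)
  have hα : ⟪c -ᵥ p₀, p₁ -ᵥ p₀⟫ / ‖p₁ -ᵥ p₀‖ ^ 2 = 1 / 2 := by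
    rw [mem_perpBisector_iff_inner_eq.1 (mem_perpBisector_iff_dist_eq.2 hdist.symm),
      dist_eq_norm_vsub' V]
    field_simp
  rw [hα] at hdecomp
  set β := ⟪c -ᵥ p₀, p₂ -ᵥ p₀⟫ / ‖p₂ -ᵥ p₀‖ ^ 2
  have hβ : 0 < β := pos_of_vsub_eq_smul_add_smul_of_sSameSide hdecomp hside
  have hnorm := congrArg (‖·‖ ^ 2) hdecomp
  simp only [norm_smul_add_smul_sq_of_inner_eq_zero hperp] at hnorm
  have hiso := dist_sq_eq_four_mul_sin_sq_of_dist_eq_of_angle_eq_two_mul hdist hangle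
  rw [dist_eq_norm_vsub V, dist_eq_norm_vsub V] at hiso
  have hsin : 0 < sin ω := sin_pos_of_pos_of_lt_pi hω.1 (by linarith [hω.2, pi_pos])
  have hcos : 0 < cos ω := cos_pos_of_mem_Ioo ⟨by linarith [hω.1, pi_pos], hω.2⟩
  -- the height of `c` over the chord `p₀p₁` is `dist p₁ p₀ * cot ω / 2`
  have hheight : 2 * sin ω * (β * ‖p₂ -ᵥ p₀‖) = cos ω * ‖p₁ -ᵥ p₀‖ := by
    refine (sq_eq_sq₀ (by positivity) (by positivity)).1 ?_
    rw [hnorm] at hiso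
    linear_combination (-1) * hiso - ‖p₁ -ᵥ p₀‖ ^ 2 * sin_sq_add_cos_sq ω
  rw [hdecomp, dist_eq_norm_vsub V, dist_eq_norm_vsub V, cot_eq_cos_div_sin]
  congr 2
  field_simp
  linear_combination hheight

end Euclidean

theorem stmt_5_general (A B C Nb Nc : EuclideanSpace ℝ (Fin 2))
    (a b c S ω nb nc : ℝ)
    (ha : a = dist B C) (hb : b = dist C A) (hc : c = dist A B)
    (hright : ∠ B A C = Real.pi / 2)
    (hS : S = b * c / 2)
    (hω : ω ∈ Set.Ioo 0 (Real.pi / 2))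
    (htan : Real.tan ω = 4 * S / (a ^ 2 + b ^ 2 + c ^ 2))
    (hnb : nb = (b / 2) * Real.sqrt (Real.cot ω ^ 2 - 3))
    (hnc : nc = (c / 2) * Real.sqrt (Real.cot ω ^ 2 - 3))
    (hNb : dist Nb C = dist Nb A ∧ ∠ C Nb A = 2 * ω ∧
      (affineSpan ℝ ({C, A} : Set (EuclideanSpace ℝ (Fin 2)))).SSameSide Nb B)
    (hNc : dist Nc A = dist Nc B ∧ ∠ A Nc B = 2 * ω ∧
      (affineSpan ℝ ({A, B} : Set (EuclideanSpace ℝ (Fin 2)))).SSameSide Nc C) :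
    nb ^ 2 + nc ^ 2 = dist Nb Nc ^ 2 := by
  have hbc : b * c ≠ 0 := fun h =>
    (tan_pos_of_pos_of_lt_pi_div_two hω.1 hω.2).ne' (by rw [htan, hS, h]; simp)
  have hb0 : 0 < b := (hb ▸ dist_nonneg).lt_of_ne' (left_ne_zero_of_mul hbc)
  have hc0 : 0 < c := (hc ▸ dist_nonneg).lt_of_ne' (right_ne_zero_of_mul hbc)
  have hCA : dist C A = b := hb.symm
  have hBA : dist B A = c := by rw [dist_comm, hc]
  have hperp : ⟪B -ᵥ A, C -ᵥ A⟫ = 0 :=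
    (InnerProductGeometry.inner_eq_zero_iff_angle_eq_pi_div_two _ _).2 hright
  have hpyth : a ^ 2 = b ^ 2 + c ^ 2 := by
    have := (dist_sq_eq_dist_sq_add_dist_sq_iff_angle_eq_pi_div_two B A C).2 hright
    rw [← ha, hBA, hCA] at this
    linear_combination this
  have hcot : cot ω * (b * c) = b ^ 2 + c ^ 2 := by
    rw [← tan_inv_eq_cot, htan, hS, hpyth]
    field_simp
    ring
  have hcot_two : 2 ≤ cot ω :=
    le_of_mul_le_mul_right (a := b * c) (by nlinarith [sq_nonneg (b - c)]) (mul_pos hb0 hc0)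
  have hperp' : ⟪C -ᵥ A, B -ᵥ A⟫ = 0 := real_inner_comm (B -ᵥ A) _ ▸ hperp
  have hNb' := vsub_eq_of_dist_eq_of_angle_eq_two_mul finrank_euclideanSpace_fin hω
    (dist_pos.1 (hCA ▸ hb0)) hperp' hNb.1 hNb.2.1 hNb.2.2
  have hNc' := vsub_eq_of_dist_eq_of_angle_eq_two_mul finrank_euclideanSpace_fin hω
    (dist_pos.1 (hBA ▸ hc0)) hperp hNc.1.symm (angle_comm A Nc B ▸ hNc.2.1)
    (Set.pair_comm A B ▸ hNc.2.2)
  have hdiff : Nb -ᵥ Nc = (1 / 2 - cot ω * c / (2 * b)) • (C -ᵥ A)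
      + (cot ω * b / (2 * c) - 1 / 2) • (B -ᵥ A) := by
    rw [← vsub_sub_vsub_cancel_right Nb Nc A, hNb', hNc', hCA, hBA]
    module
  rw [dist_eq_norm_vsub, hdiff, norm_smul_add_smul_sq_of_inner_eq_zero hperp',
    ← dist_eq_norm_vsub, ← dist_eq_norm_vsub, hCA, hBA, hnb, hnc, mul_pow, mul_pow,
    sq_sqrt (by nlinarith)]
  field_simp
  linear_combination 4 * hcot

/-- If `ABC` is right-angled at `A`, the B-Neuberg and C-Neuberg circles are
orthogonal: `n_b² + n_c² = N_bN_c²`. -/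
theorem stmt_5 (A B C Nb Nc : EuclideanSpace ℝ (Fin 2))
    (hABC : AffineIndependent ℝ ![A, B, C])
    (a b c S ω nb nc : ℝ)
    (ha : a = dist B C) (hb : b = dist C A) (hc : c = dist A B)
    (hright : ∠ B A C = Real.pi / 2)
    (hS : S = b * c / 2)
    (hω : ω ∈ Set.Ioo 0 (Real.pi / 2))
    (htan : Real.tan ω = 4 * S / (a ^ 2 + b ^ 2 + c ^ 2))
    (hnb : nb = (b / 2) * Real.sqrt (Real.cot ω ^ 2 - 3))
    (hnc : nc = (c / 2) * Real.sqrt (Real.cot ω ^ 2 - 3))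
    (hNb : dist Nb C = dist Nb A ∧ ∠ C Nb A = 2 * ω ∧
      (affineSpan ℝ ({C, A} : Set (EuclideanSpace ℝ (Fin 2)))).SSameSide Nb B)
    (hNc : dist Nc A = dist Nc B ∧ ∠ A Nc B = 2 * ω ∧
      (affineSpan ℝ ({A, B} : Set (EuclideanSpace ℝ (Fin 2)))).SSameSide Nc C) :
    nb ^ 2 + nc ^ 2 = dist Nb Nc ^ 2 :=
  stmt_5_general A B C Nb Nc a b c S ω nb nc ha hb hc hright hS hω htan hnb hnc hNb hNc
end

section
/- The A-Lucas and C-Lucas inner circles of a triangle ABC are externally tangent: the distance between their centers equals the sum of their radii, L_aL_c = l_a + l_c. Equivalently, with O the circumcenter, OL_a = R − l_a, OL_c = R − l_c, angle L_aOL_c = 2B, the identity (R−l_a)² + (R−l_c)² − 2(R−l_a)(R−l_c)cos 2B = (l_a + l_c)² holds, where l_a = Rbc/(bc+2aR) and l_c = Rab/(ab+2cR), using sin B = b/(2R). -/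
/-
Write `L_a = O + q (A - O)` and `L_c = O + s (C - O)`, so that `qR = R - l_a` and `sR = R - l_c`.
Expanding `‖q (A - O) - s (C - O)‖²` with `2⟪A - O, C - O⟫ = 2R² - b²` gives
`|L_a L_c|² = (R - l_a)² + (R - l_c)² - (R - l_a)(R - l_c)(2 - b²/R²)`, so the tangency
`|L_a L_c| = l_a + l_c` is equivalent to `(R - l_a)(R - l_c) b² = 4 l_a l_c R²`, i.e. to
`sin² B = l_a l_c / ((R - l_a)(R - l_c))`, which is a rational identity in `a, b, c, R`.
-/

open AffineMap

theorem dist_lineMap_lineMap_sq {V P : Type*} [NormedAddCommGroup V] [InnerProductSpace ℝ V]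
    [MetricSpace P] [NormedAddTorsor V P] (O A C : P) (q s : ℝ) :
    dist (lineMap O A q) (lineMap O C s) ^ 2 =
      q ^ 2 * dist O A ^ 2 + s ^ 2 * dist O C ^ 2
        - q * s * (dist O A ^ 2 + dist O C ^ 2 - dist A C ^ 2) := by
  have hAC : dist A C = ‖(A -ᵥ O) - (C -ᵥ O)‖ := by
    rw [vsub_sub_vsub_cancel_right, dist_eq_norm_vsub V]
  have hLL : dist (lineMap O A q) (lineMap O C s) = ‖q • (A -ᵥ O) - s • (C -ᵥ O)‖ := by
    rw [dist_eq_norm_vsub V, ← vsub_sub_vsub_cancel_right _ _ O, lineMap_vsub_left,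
      lineMap_vsub_left]
  rw [hLL, hAC, dist_comm O A, dist_comm O C, dist_eq_norm_vsub V, dist_eq_norm_vsub V,
    norm_sub_sq_real, norm_sub_sq_real, norm_smul, norm_smul, real_inner_smul_left,
    real_inner_smul_right, mul_pow, mul_pow, Real.norm_eq_abs, Real.norm_eq_abs, sq_abs, sq_abs]
  ring

theorem exists_lineMap_of_mem_segment {E : Type*} [SeminormedAddCommGroup E] [NormedSpace ℝ E]
    {x y z : E} (hz : z ∈ segment ℝ x y) :
    ∃ t : ℝ, z = lineMap x y t ∧ dist x z = t * dist x y := by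
  rw [segment_eq_image_lineMap] at hz
  obtain ⟨t, ⟨ht, -⟩, rfl⟩ := hz
  exact ⟨t, rfl, by rw [dist_left_lineMap, Real.norm_of_nonneg ht]⟩

theorem lucas_radii_sin_sq {a b c R la lc : ℝ}
    (hla : la = R * b * c / (b * c + 2 * a * R)) (hlc : lc = R * a * b / (a * b + 2 * c * R))
    (hDa : b * c + 2 * a * R ≠ 0) (hDc : a * b + 2 * c * R ≠ 0) :
    (R - la) * (R - lc) * b ^ 2 = 4 * la * lc * R ^ 2 := by
  rw [hla, hlc, sub_div' hDa, sub_div' hDc]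
  field_simp
  ring

/-- The A-Lucas and C-Lucas inner circles are externally tangent:
`dist L_a L_c = l_a + l_c`, where `l_a = Rbc/(bc+2aR)`, `l_c = Rab/(ab+2cR)` and
the centers lie on the segments `OA`, `OC` with `OL_a = R - l_a`, `OL_c = R - l_c`. -/
theorem stmt_7 (A B C O La Lc : EuclideanSpace ℝ (Fin 2))
    (hABC : AffineIndependent ℝ ![A, B, C])
    (a b c R la lc : ℝ)
    (ha : a = dist B C) (hb : b = dist C A) (hc : c = dist A B)
    (hR : 0 < R) (hO : dist O A = R ∧ dist O B = R ∧ dist O C = R)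
    (hla : la = R * b * c / (b * c + 2 * a * R))
    (hlc : lc = R * a * b / (a * b + 2 * c * R))
    (hLa : La ∈ segment ℝ O A ∧ dist O La = R - la)
    (hLc : Lc ∈ segment ℝ O C ∧ dist O Lc = R - lc) :
    dist La Lc = la + lc := by
  obtain ⟨hOA, -, hOC⟩ := hO
  obtain ⟨q, rfl, hq⟩ := exists_lineMap_of_mem_segment hLa.1
  obtain ⟨s, rfl, hs⟩ := exists_lineMap_of_mem_segment hLc.1
  have hqR : q * R = R - la := by rw [← hLa.2, hq, hOA]
  have hsR : s * R = R - lc := by rw [← hLc.2, hs, hOC]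
  have hdist := dist_lineMap_lineMap_sq O A C q s
  rw [hOA, hOC, dist_comm A C, ← hb] at hdist
  have ha0 : 0 < a := ha ▸ dist_pos.2 (hABC.injective.ne (by decide : (1 : Fin 3) ≠ 2))
  have hc0 : 0 < c := hc ▸ dist_pos.2 (hABC.injective.ne (by decide : (0 : Fin 3) ≠ 1))
  have hb0 : 0 ≤ b := hb ▸ dist_nonneg
  have hsin := lucas_radii_sin_sq hla hlc (by positivity) (by positivity)
  have hsq : dist (lineMap O A q) (lineMap O C s) ^ 2 = (la + lc) ^ 2 := by
    refine mul_right_cancel₀ (pow_ne_zero 2 hR.ne') ?_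
    linear_combination R ^ 2 * hdist + R ^ 2 * (q * R + R - la) * hqR
      + R ^ 2 * (s * R + R - lc) * hsR + (b ^ 2 - 2 * R ^ 2) * (q * R * hsR + (R - lc) * hqR)
      + hsin
  have hl0 : 0 ≤ la + lc := by rw [hla, hlc]; positivity
  exact (sq_eq_sq₀ dist_nonneg hl0).1 hsq
end

section
/- The radius of the radical circle of the three excircles of a triangle ABC equals (1/2)√(r² + p²), where r is the inradius and p the semiperimeter. Equivalently, the common tangent length from the Spieker point S (incenter of the medial triangle) to each excircle equals (1/2)√(r² + p²). -/
/-!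
Work at one vertex, say `A`, with `u = B - A` and `v = C - A`. Both the excenter `I_a` and
the Spieker point are explicit combinations of `u` and `v`, so
`2(a + b + c)(b + c - a) • (S_p - I_a)` is a combination `β • u + γ • v` whose squared norm is
a polynomial in `a, b, c` (the polarization identity). Subtracting `r_a² = S² / (p - a)²` and
eliminating `S²` by Heron's formula leaves `(r² + p²) / 4`. The other two
excircles follow by relabelling the vertices.
-/

section Norm

variable {V : Type*} [NormedAddCommGroup V] [InnerProductSpace ℝ V]

theorem norm_smul_add_smul_sq (u v : V) (β γ : ℝ) :
    ‖β • u + γ • v‖ ^ 2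
      = β ^ 2 * ‖u‖ ^ 2 + γ ^ 2 * ‖v‖ ^ 2 + β * γ * (‖u‖ ^ 2 + ‖v‖ ^ 2 - ‖u - v‖ ^ 2) := by
  rw [norm_add_sq_real, norm_sub_sq_real, norm_smul, norm_smul, real_inner_smul_left,
    real_inner_smul_right, mul_pow, mul_pow, Real.norm_eq_abs, Real.norm_eq_abs, sq_abs, sq_abs]
  ring

end Norm

section Barycentric

variable {V P : Type*} [AddCommGroup V] [Module ℝ V] [AddTorsor V P]

theorem spieker_relation_swap_vertex {A B C Sp : P} {a b c : ℝ}
    (h : (2 * (a + b + c)) • (Sp -ᵥ A) = (c + a) • (B -ᵥ A) + (a + b) • (C -ᵥ A)) :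
    (2 * (b + a + c)) • (Sp -ᵥ B) = (c + b) • (A -ᵥ B) + (b + a) • (C -ᵥ B) := by
  rw [← vsub_sub_vsub_cancel_right Sp B A, ← vsub_sub_vsub_cancel_right C B A,
    ← neg_vsub_eq_vsub_rev B A]
  linear_combination (norm := module) h

theorem spieker_relation_swap_sides {A B C Sp : P} {a b c : ℝ}
    (h : (2 * (a + b + c)) • (Sp -ᵥ A) = (c + a) • (B -ᵥ A) + (a + b) • (C -ᵥ A)) :
    (2 * (a + c + b)) • (Sp -ᵥ A) = (b + a) • (C -ᵥ A) + (a + c) • (B -ᵥ A) := by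
  linear_combination (norm := module) h

end Barycentric

section Triangle

variable {V P : Type*} [NormedAddCommGroup V] [InnerProductSpace ℝ V] [MetricSpace P]
  [NormedAddTorsor V P]

theorem dist_sq_sub_exradius_sq {A B C Sp Ia : P} {a b c p S : ℝ}
    (ha : a = dist B C) (hb : b = dist C A) (hc : c = dist A B) (hp : p = (a + b + c) / 2)
    (hS : S ≠ 0)
    (hHeron : 16 * S ^ 2 =
      2 * a ^ 2 * b ^ 2 + 2 * b ^ 2 * c ^ 2 + 2 * c ^ 2 * a ^ 2 - a ^ 4 - b ^ 4 - c ^ 4)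
    (hIa : (b + c - a) • (Ia -ᵥ A) = b • (B -ᵥ A) + c • (C -ᵥ A))
    (hSp : (2 * (a + b + c)) • (Sp -ᵥ A) = (c + a) • (B -ᵥ A) + (a + b) • (C -ᵥ A)) :
    dist Sp Ia ^ 2 - (S / (p - a)) ^ 2 = ((S / p) ^ 2 + p ^ 2) / 4 := by
  have hfactors : (a + b + c) * (b + c - a) * (c + a - b) * (a + b - c) ≠ 0 := by
    rw [show (a + b + c) * (b + c - a) * (c + a - b) * (a + b - c) = 16 * S ^ 2 by
      linear_combination -hHeron]
    positivity
  have hs : a + b + c ≠ 0 := by intro h; apply hfactors; rw [h]; ring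
  have hk : b + c - a ≠ 0 := by intro h; apply hfactors; rw [h]; ring
  have hcomb : (2 * (a + b + c) * (b + c - a)) • (Sp -ᵥ Ia)
      = ((b + c - a) * (c + a) - 2 * (a + b + c) * b) • (B -ᵥ A)
        + ((b + c - a) * (a + b) - 2 * (a + b + c) * c) • (C -ᵥ A) := by
    rw [← vsub_sub_vsub_cancel_right Sp Ia A]
    linear_combination (norm := module) (b + c - a) • hSp - (2 * (a + b + c)) • hIa
  have hnorm := congrArg (‖·‖ ^ 2) hcomb
  simp only [norm_smul_add_smul_sq, vsub_sub_vsub_cancel_right, norm_smul, mul_pow,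
    Real.norm_eq_abs, sq_abs, ← dist_eq_norm_vsub] at hnorm
  rw [dist_comm B A, ← ha, ← hb, ← hc] at hnorm
  rw [show p - a = (b + c - a) / 2 by rw [hp]; ring, hp]
  field_simp
  linear_combination 4 * hnorm - (4 * (a + b + c) ^ 2 + (b + c - a) ^ 2) * hHeron

end Triangle

theorem sqrt_div_four (x : ℝ) : √(x / 4) = 1 / 2 * √x := by
  rw [Real.sqrt_div' x (by norm_num), show (4 : ℝ) = 2 ^ 2 by norm_num,
    Real.sqrt_sq (by norm_num)]
  ring

theorem stmt_8_general (A B C Sp Ia Ib Ic : EuclideanSpace ℝ (Fin 2))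
    (a b c p S r ra rb rc : ℝ)
    (ha : a = dist B C) (hb : b = dist C A) (hc : c = dist A B)
    (hp : p = (a + b + c) / 2)
    (hS : 0 < S)
    (hHeron : 16 * S ^ 2 =
      2 * a ^ 2 * b ^ 2 + 2 * b ^ 2 * c ^ 2 + 2 * c ^ 2 * a ^ 2 - a ^ 4 - b ^ 4 - c ^ 4)
    (hr : r = S / p) (hra : ra = S / (p - a)) (hrb : rb = S / (p - b))
    (hrc : rc = S / (p - c))
    (hIa : (b + c - a) • (Ia -ᵥ A) = b • (B -ᵥ A) + c • (C -ᵥ A))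
    (hIb : (a + c - b) • (Ib -ᵥ B) = a • (A -ᵥ B) + c • (C -ᵥ B))
    (hIc : (a + b - c) • (Ic -ᵥ C) = a • (A -ᵥ C) + b • (B -ᵥ C))
    (hSp : (2 * (a + b + c)) • (Sp -ᵥ A) = (c + a) • (B -ᵥ A) + (a + b) • (C -ᵥ A)) :
    Real.sqrt (dist Sp Ia ^ 2 - ra ^ 2) = (1 / 2) * Real.sqrt (r ^ 2 + p ^ 2) ∧
    Real.sqrt (dist Sp Ib ^ 2 - rb ^ 2) = (1 / 2) * Real.sqrt (r ^ 2 + p ^ 2) ∧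
    Real.sqrt (dist Sp Ic ^ 2 - rc ^ 2) = (1 / 2) * Real.sqrt (r ^ 2 + p ^ 2) := by
  have hpowA := dist_sq_sub_exradius_sq ha hb hc hp hS.ne' hHeron hIa hSp
  have hpowB := dist_sq_sub_exradius_sq (dist_comm C A ▸ hb) (dist_comm B C ▸ ha)
    (dist_comm A B ▸ hc) (p := p) (by rw [hp]; ring) hS.ne' (by linear_combination hHeron) hIb
    (spieker_relation_swap_vertex hSp)
  have hpowC := dist_sq_sub_exradius_sq hc ha hb (p := p) (by rw [hp]; ring) hS.ne'
    (by linear_combination hHeron) hIc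
    (spieker_relation_swap_vertex (spieker_relation_swap_sides hSp))
  rw [← hr, ← hra] at hpowA
  rw [← hr, ← hrb] at hpowB
  rw [← hr, ← hrc] at hpowC
  rw [hpowA, hpowB, hpowC, sqrt_div_four]
  exact ⟨rfl, rfl, rfl⟩

/-- The radius of the radical circle of the three excircles equals
`(1/2)√(r² + p²)`: the tangent length from the Spieker point `Sp` to each
excircle is `(1/2)√(r² + p²)`.  Excenters and the Spieker point are given by
their barycentric coordinates, `S` is the area (Heron), `p` the semiperimeter,
`r = S/p` the inradius and `r_a = S/(p-a)` etc. the exradii. -/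
theorem stmt_8 (A B C Sp Ia Ib Ic : EuclideanSpace ℝ (Fin 2))
    (hABC : AffineIndependent ℝ ![A, B, C])
    (a b c p S r ra rb rc : ℝ)
    (ha : a = dist B C) (hb : b = dist C A) (hc : c = dist A B)
    (hp : p = (a + b + c) / 2)
    (hS : 0 < S)
    (hHeron : 16 * S ^ 2 =
      2 * a ^ 2 * b ^ 2 + 2 * b ^ 2 * c ^ 2 + 2 * c ^ 2 * a ^ 2 - a ^ 4 - b ^ 4 - c ^ 4)
    (hr : r = S / p) (hra : ra = S / (p - a)) (hrb : rb = S / (p - b))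
    (hrc : rc = S / (p - c))
    (hIa : (b + c - a) • (Ia -ᵥ A) = b • (B -ᵥ A) + c • (C -ᵥ A))
    (hIb : (a + c - b) • (Ib -ᵥ B) = a • (A -ᵥ B) + c • (C -ᵥ B))
    (hIc : (a + b - c) • (Ic -ᵥ C) = a • (A -ᵥ C) + b • (B -ᵥ C))
    (hSp : (2 * (a + b + c)) • (Sp -ᵥ A) = (c + a) • (B -ᵥ A) + (a + b) • (C -ᵥ A)) :
    Real.sqrt (dist Sp Ia ^ 2 - ra ^ 2) = (1 / 2) * Real.sqrt (r ^ 2 + p ^ 2) ∧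
    Real.sqrt (dist Sp Ib ^ 2 - rb ^ 2) = (1 / 2) * Real.sqrt (r ^ 2 + p ^ 2) ∧
    Real.sqrt (dist Sp Ic ^ 2 - rc ^ 2) = (1 / 2) * Real.sqrt (r ^ 2 + p ^ 2) :=
  stmt_8_general A B C Sp Ia Ib Ic a b c p S r ra rb rc ha hb hc hp hS hHeron hr hra hrb hrc hIa hIb
    hIc hSp
end

section
/- For a triangle ABC with orthocenter H, circumcenter O, circumradius R, and a circle centered at H intersecting the line B₁C₁ (the midline parallel to BC, with B₁, C₁ the midpoints of CA, AB) in points P₁, Q₁, the distances from A to P₁ and Q₁ satisfy AQ₁² = R_H² + (1/2)(R² − OH²), where R_H is the radius of the circle centered at H. Consequently, if the circle centered at H meets all three midlines, the six intersection points are at equal distance from the respective opposite vertices: AP₁ = AQ₁ = BP₂ = BQ₂ = CP₃ = CQ₃. -/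
/-!
Put `a = A - O`, `b = B - O`, `c = C - O`, so that `H - O = a + b + c` and `H - A = b + c`.
Since `|b| = |c|`, the direction `(b - c)/2` of the midline `B₁C₁` is orthogonal to
`H - A = b + c`, hence `AX² - HX²` is constant for `X` on the midline. Evaluating it at `X = B₁`
gives `(R² - OH²)/2`, so `AX² = R_H² + (R² - OH²)/2` for every point `X` of the midline on the
circle of radius `R_H` about `H`; by symmetry the same value is obtained for the other two midlines.
-/

open RealInnerProductSpace

namespace EuclideanGeometry

variable {V P : Type*} [NormedAddCommGroup V] [InnerProductSpace ℝ V] [MetricSpace P]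
  [NormedAddTorsor V P]

theorem dist_sq_sub_dist_sq_eq_of_inner_vsub_eq_zero {a h x y : P}
    (hxy : ⟪x -ᵥ y, h -ᵥ a⟫ = 0) :
    dist a x ^ 2 - dist h x ^ 2 = dist a y ^ 2 - dist h y ^ 2 := by
  simp only [dist_eq_norm_vsub' V]
  rw [← vsub_add_vsub_cancel x y a, ← vsub_add_vsub_cancel x y h, norm_add_sq_real,
    norm_add_sq_real]
  have hcross : ⟪x -ᵥ y, y -ᵥ a⟫ - ⟪x -ᵥ y, y -ᵥ h⟫ = ⟪x -ᵥ y, h -ᵥ a⟫ := by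
    rw [← inner_sub_right, vsub_sub_vsub_cancel_left]
  linarith

variable {A B C O H : P}

theorem inner_vsub_midpoint_vsub_eq_zero_of_mem_midline {X : P} (hBC : dist O B = dist O C)
    (hH : H -ᵥ O = (A -ᵥ O) + (B -ᵥ O) + (C -ᵥ O))
    (hX : X ∈ line[ℝ, midpoint ℝ C A, midpoint ℝ A B]) :
    ⟪X -ᵥ midpoint ℝ C A, H -ᵥ A⟫ = 0 := by
  have hdir : X -ᵥ midpoint ℝ C A ∈ vectorSpan ℝ {midpoint ℝ C A, midpoint ℝ A B} := by
    rw [← direction_affineSpan]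
    exact AffineSubspace.vsub_mem_direction hX (left_mem_affineSpan_pair ℝ _ _)
  obtain ⟨r, hr⟩ := mem_vectorSpan_pair_rev.1 hdir
  have hHA : H -ᵥ A = (B -ᵥ O) + (C -ᵥ O) := by
    rw [← vsub_sub_vsub_cancel_right H A O, hH]; abel
  have hperp : ⟪B -ᵥ O + (C -ᵥ O), B -ᵥ O - (C -ᵥ O)⟫ = 0 := by
    rw [real_inner_add_sub_eq_zero_iff, ← dist_eq_norm_vsub', ← dist_eq_norm_vsub', hBC]
  rw [← hr, midpoint_comm A B, midpoint_vsub_midpoint_same_right,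
    ← vsub_sub_vsub_cancel_right B C O, hHA, real_inner_smul_left,
    real_inner_smul_left, real_inner_comm, hperp, mul_zero, mul_zero]

theorem dist_sq_sub_dist_sq_midpoint {R : ℝ} (hA : dist O A = R) (hB : dist O B = R)
    (hC : dist O C = R) (hH : H -ᵥ O = (A -ᵥ O) + (B -ᵥ O) + (C -ᵥ O)) :
    dist A (midpoint ℝ C A) ^ 2 - dist H (midpoint ℝ C A) ^ 2 = (R ^ 2 - dist O H ^ 2) / 2 := by
  have ha : ‖A -ᵥ O‖ ^ 2 = R ^ 2 := by rw [← dist_eq_norm_vsub', hA]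
  have hb : ‖B -ᵥ O‖ ^ 2 = R ^ 2 := by rw [← dist_eq_norm_vsub', hB]
  have hc : ‖C -ᵥ O‖ ^ 2 = R ^ 2 := by rw [← dist_eq_norm_vsub', hC]
  rw [dist_eq_norm_vsub' V, dist_eq_norm_vsub' V, dist_eq_norm_vsub' V,
    ← vsub_sub_vsub_cancel_right _ A O, ← vsub_sub_vsub_cancel_right _ H O, midpoint_vsub, hH]
  generalize A -ᵥ O = a at ha ⊢
  generalize B -ᵥ O = b at hb ⊢
  generalize C -ᵥ O = c at hc ⊢
  simp only [← real_inner_self_eq_norm_sq, inner_sub_left, inner_sub_right, inner_add_left,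
    inner_add_right, real_inner_smul_left, real_inner_smul_right, real_inner_comm a b,
    real_inner_comm a c, real_inner_comm b c, invOf_eq_inv] at ha hb hc ⊢
  linear_combination (ha - hb + hc) / 2

theorem dist_sq_eq_of_collinear_midpoints {X : P} {R r : ℝ} (hBC : B ≠ C)
    (hA : dist O A = R) (hB : dist O B = R) (hC : dist O C = R)
    (hH : H -ᵥ O = (A -ᵥ O) + (B -ᵥ O) + (C -ᵥ O))
    (hX : Collinear ℝ {midpoint ℝ C A, midpoint ℝ A B, X}) (hHX : dist H X = r) :
    dist A X ^ 2 = r ^ 2 + (R ^ 2 - dist O H ^ 2) / 2 := by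
  have hmid : midpoint ℝ C A ≠ midpoint ℝ A B := by
    rw [Ne, midpoint_eq_midpoint_iff_vsub_eq_vsub]
    exact fun h ↦ hBC (vsub_left_injective A h).symm
  have hXline : X ∈ line[ℝ, midpoint ℝ C A, midpoint ℝ A B] :=
    hX.mem_affineSpan_of_mem_of_ne (by simp) (by simp) (by simp) hmid
  have hconst := dist_sq_sub_dist_sq_eq_of_inner_vsub_eq_zero
    (inner_vsub_midpoint_vsub_eq_zero_of_mem_midline (hB.trans hC.symm) hH hXline)
  rw [dist_sq_sub_dist_sq_midpoint hA hB hC hH, hHX] at hconst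
  linarith

end EuclideanGeometry

open EuclideanGeometry

theorem stmt_9_general (A B C O H : EuclideanSpace ℝ (Fin 2))
    (P₁ Q₁ P₂ Q₂ P₃ Q₃ : EuclideanSpace ℝ (Fin 2))
    (hABC : AffineIndependent ℝ ![A, B, C])
    (R RH : ℝ)
    (hO : dist O A = R ∧ dist O B = R ∧ dist O C = R)
    (hH : H -ᵥ O = (A -ᵥ O) + (B -ᵥ O) + (C -ᵥ O))
    (hP₁ : Collinear ℝ ({midpoint ℝ C A, midpoint ℝ A B, P₁} :
      Set (EuclideanSpace ℝ (Fin 2))) ∧ dist H P₁ = RH)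
    (hQ₁ : Collinear ℝ ({midpoint ℝ C A, midpoint ℝ A B, Q₁} :
      Set (EuclideanSpace ℝ (Fin 2))) ∧ dist H Q₁ = RH)
    (hP₂ : Collinear ℝ ({midpoint ℝ A B, midpoint ℝ B C, P₂} :
      Set (EuclideanSpace ℝ (Fin 2))) ∧ dist H P₂ = RH)
    (hQ₂ : Collinear ℝ ({midpoint ℝ A B, midpoint ℝ B C, Q₂} :
      Set (EuclideanSpace ℝ (Fin 2))) ∧ dist H Q₂ = RH)
    (hP₃ : Collinear ℝ ({midpoint ℝ B C, midpoint ℝ C A, P₃} :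
      Set (EuclideanSpace ℝ (Fin 2))) ∧ dist H P₃ = RH)
    (hQ₃ : Collinear ℝ ({midpoint ℝ B C, midpoint ℝ C A, Q₃} :
      Set (EuclideanSpace ℝ (Fin 2))) ∧ dist H Q₃ = RH) :
    dist A Q₁ ^ 2 = RH ^ 2 + (1 / 2) * (R ^ 2 - dist O H ^ 2) ∧
    dist A P₁ = dist A Q₁ ∧ dist A Q₁ = dist B P₂ ∧ dist B P₂ = dist B Q₂ ∧
    dist B Q₂ = dist C P₃ ∧ dist C P₃ = dist C Q₃ := by
  obtain ⟨hA, hB, hC⟩ := hO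
  have hAB : A ≠ B := by simpa using hABC.injective.ne (show (0 : Fin 3) ≠ 1 by decide)
  have hBC : B ≠ C := by simpa using hABC.injective.ne (show (1 : Fin 3) ≠ 2 by decide)
  have hCA : C ≠ A := by simpa using hABC.injective.ne (show (2 : Fin 3) ≠ 0 by decide)
  have hH' : H -ᵥ O = (B -ᵥ O) + (C -ᵥ O) + (A -ᵥ O) := by rw [hH]; abel
  have hH'' : H -ᵥ O = (C -ᵥ O) + (A -ᵥ O) + (B -ᵥ O) := by rw [hH]; abel
  have k₁ := dist_sq_eq_of_collinear_midpoints hBC hA hB hC hH hP₁.1 hP₁.2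
  have k₂ := dist_sq_eq_of_collinear_midpoints hBC hA hB hC hH hQ₁.1 hQ₁.2
  have k₃ := dist_sq_eq_of_collinear_midpoints hCA hB hC hA hH' hP₂.1 hP₂.2
  have k₄ := dist_sq_eq_of_collinear_midpoints hCA hB hC hA hH' hQ₂.1 hQ₂.2
  have k₅ := dist_sq_eq_of_collinear_midpoints hAB hC hA hB hH'' hP₃.1 hP₃.2
  have k₆ := dist_sq_eq_of_collinear_midpoints hAB hC hA hB hH'' hQ₃.1 hQ₃.2
  have eq_of_sq_eq {x y : ℝ} (h : x ^ 2 = y ^ 2) (hx : 0 ≤ x) (hy : 0 ≤ y) : x = y :=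
    (pow_left_inj₀ hx hy two_ne_zero).1 h
  refine ⟨by rw [k₂]; ring, ?_, ?_, ?_, ?_, ?_⟩ <;>
    refine eq_of_sq_eq ?_ dist_nonneg dist_nonneg
  exacts [k₁.trans k₂.symm, k₂.trans k₃.symm, k₃.trans k₄.symm, k₄.trans k₅.symm,
    k₅.trans k₆.symm]

/-- A circle centered at the orthocenter `H` with radius `R_H` meets the midline
`B₁C₁` in `P₁, Q₁` (and the other midlines in `P₂, Q₂, P₃, Q₃`); then
`AQ₁² = R_H² + (R² − OH²)/2` and the six points are equidistant from the
respective opposite vertices: `AP₁ = AQ₁ = BP₂ = BQ₂ = CP₃ = CQ₃`. -/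
theorem stmt_9 (A B C O H : EuclideanSpace ℝ (Fin 2))
    (P₁ Q₁ P₂ Q₂ P₃ Q₃ : EuclideanSpace ℝ (Fin 2))
    (hABC : AffineIndependent ℝ ![A, B, C])
    (R RH : ℝ) (hR : 0 < R)
    (hO : dist O A = R ∧ dist O B = R ∧ dist O C = R)
    (hH : H -ᵥ O = (A -ᵥ O) + (B -ᵥ O) + (C -ᵥ O))
    (hP₁ : Collinear ℝ ({midpoint ℝ C A, midpoint ℝ A B, P₁} :
      Set (EuclideanSpace ℝ (Fin 2))) ∧ dist H P₁ = RH)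
    (hQ₁ : Collinear ℝ ({midpoint ℝ C A, midpoint ℝ A B, Q₁} :
      Set (EuclideanSpace ℝ (Fin 2))) ∧ dist H Q₁ = RH)
    (hP₂ : Collinear ℝ ({midpoint ℝ A B, midpoint ℝ B C, P₂} :
      Set (EuclideanSpace ℝ (Fin 2))) ∧ dist H P₂ = RH)
    (hQ₂ : Collinear ℝ ({midpoint ℝ A B, midpoint ℝ B C, Q₂} :
      Set (EuclideanSpace ℝ (Fin 2))) ∧ dist H Q₂ = RH)
    (hP₃ : Collinear ℝ ({midpoint ℝ B C, midpoint ℝ C A, P₃} :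
      Set (EuclideanSpace ℝ (Fin 2))) ∧ dist H P₃ = RH)
    (hQ₃ : Collinear ℝ ({midpoint ℝ B C, midpoint ℝ C A, Q₃} :
      Set (EuclideanSpace ℝ (Fin 2))) ∧ dist H Q₃ = RH) :
    dist A Q₁ ^ 2 = RH ^ 2 + (1 / 2) * (R ^ 2 - dist O H ^ 2) ∧
    dist A P₁ = dist A Q₁ ∧ dist A Q₁ = dist B P₂ ∧ dist B P₂ = dist B Q₂ ∧
    dist B Q₂ = dist C P₃ ∧ dist C P₃ = dist C Q₃ :=
  stmt_9_general A B C O H P₁ Q₁ P₂ Q₂ P₃ Q₃ hABC R RH hO hH hP₁ hQ₁ hP₂ hQ₂ hP₃ hQ₃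
end

section
/- Circles centered at the feet of the altitudes of an acute triangle ABC and passing through the circumcenter O cut the sides of the triangle in six points all at distance √((R² + OH²)/2) from the orthocenter H; hence these six points are concyclic on the first Droz-Farny circle. -/
/-!
The orthocenter `H` lies on the altitude through the foot `H₁`, so for a point `X` of `BC` on the
circle about `H₁` through `O`, Pythagoras gives `HX² = HH₁² + H₁O²`. By Apollonius' theorem in
the triangle `H₁OH` this is `2 H₁N² + OH²/2`, where `N` is the midpoint of `OH`, and `H₁N = R/2`
because the foot lies on the nine-point circle.
-/

open EuclideanGeometry
open scoped InnerProductSpace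

section

variable {V P : Type*} [NormedAddCommGroup V] [InnerProductSpace ℝ V] [MetricSpace P]
  [NormedAddTorsor V P]

theorem inner_vsub_eq_zero_of_mem_affineSpan_pair {v : V} {B C X Y : P}
    (hv : ⟪v, B -ᵥ C⟫_ℝ = 0) (hX : X ∈ line[ℝ, B, C]) (hY : Y ∈ line[ℝ, B, C]) :
    ⟪v, X -ᵥ Y⟫_ℝ = 0 := by
  have hXY := AffineSubspace.vsub_mem_direction hX hY
  rw [direction_affineSpan, vectorSpan_pair, Submodule.mem_span_singleton] at hXY
  obtain ⟨r, hr⟩ := hXY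
  rw [← hr, inner_smul_right, hv, mul_zero]

theorem inner_vsub_vsub_eq_zero_of_vsub_eq_add {A B C O H : P}
    (hH : H -ᵥ O = (A -ᵥ O) + (B -ᵥ O) + (C -ᵥ O)) (hBC : dist O B = dist O C) :
    ⟪H -ᵥ A, B -ᵥ C⟫_ℝ = 0 := by
  rw [← vsub_sub_vsub_cancel_right H A O, hH, ← vsub_sub_vsub_cancel_right B C O,
    add_assoc, add_sub_cancel_left, real_inner_add_sub_eq_zero_iff, ← dist_eq_norm_vsub,
    ← dist_eq_norm_vsub, dist_comm, hBC, dist_comm]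

theorem inner_vsub_foot_eq_zero_of_vsub_eq_add {A B C O H F : P}
    (hH : H -ᵥ O = (A -ᵥ O) + (B -ᵥ O) + (C -ᵥ O)) (hBC : dist O B = dist O C)
    (hAF : ⟪A -ᵥ F, B -ᵥ C⟫_ℝ = 0) :
    ⟪H -ᵥ F, B -ᵥ C⟫_ℝ = 0 := by
  rw [← vsub_add_vsub_cancel H A F, inner_add_left,
    inner_vsub_vsub_eq_zero_of_vsub_eq_add hH hBC, hAF, add_zero]

theorem dist_foot_midpoint_eq_half {A B C O H F : P}
    (hH : H -ᵥ O = (A -ᵥ O) + (B -ᵥ O) + (C -ᵥ O)) (hBC : dist O B = dist O C)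
    (hF : F ∈ line[ℝ, B, C]) (hAF : ⟪A -ᵥ F, B -ᵥ C⟫_ℝ = 0) :
    dist F (midpoint ℝ O H) = dist O A / 2 := by
  have hHF := inner_vsub_foot_eq_zero_of_vsub_eq_add hH hBC hAF
  -- `(O - F) + (H - F) = 2 (N - F)` and `A - O` have orthogonal sum and difference: the sum is
  -- perpendicular to `BC`, the difference lies along `BC`.
  have hsum : (O -ᵥ F) + (H -ᵥ F) + (A -ᵥ O) = (A -ᵥ F) + (H -ᵥ F) := by
    rw [← vsub_add_vsub_cancel A O F]; abel
  have hdiff : (O -ᵥ F) + (H -ᵥ F) - (A -ᵥ O) = (B -ᵥ F) + (C -ᵥ F) := by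
    rw [← vsub_add_vsub_cancel H O F, hH, ← vsub_add_vsub_cancel B O F,
      ← vsub_add_vsub_cancel C O F]; abel
  have hB : B ∈ line[ℝ, B, C] := left_mem_affineSpan_pair ℝ B C
  have hC : C ∈ line[ℝ, B, C] := right_mem_affineSpan_pair ℝ B C
  have hnorm : ‖(O -ᵥ F) + (H -ᵥ F)‖ = ‖A -ᵥ O‖ := by
    rw [← real_inner_add_sub_eq_zero_iff, hsum, hdiff]
    simp only [inner_add_left, inner_add_right,
      inner_vsub_eq_zero_of_mem_affineSpan_pair hAF hB hF,
      inner_vsub_eq_zero_of_mem_affineSpan_pair hAF hC hF,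
      inner_vsub_eq_zero_of_mem_affineSpan_pair hHF hB hF,
      inner_vsub_eq_zero_of_mem_affineSpan_pair hHF hC hF, add_zero]
  have htwice : (O -ᵥ F) + (H -ᵥ F) = (2 : ℝ) • (midpoint ℝ O H -ᵥ F) := by
    rw [midpoint_vsub, smul_add, smul_smul, smul_smul]; norm_num
  rw [htwice, norm_smul, Real.norm_two, ← dist_eq_norm_vsub, ← dist_eq_norm_vsub] at hnorm
  rw [dist_comm, dist_comm O]
  linarith

theorem dist_sq_of_mem_affineSpan_pair_of_dist_foot_eq {A B C O H F X : P} {R : ℝ}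
    (hA : dist O A = R) (hB : dist O B = R) (hC : dist O C = R)
    (hH : H -ᵥ O = (A -ᵥ O) + (B -ᵥ O) + (C -ᵥ O))
    (hF : F ∈ line[ℝ, B, C]) (hAF : ⟪A -ᵥ F, B -ᵥ C⟫_ℝ = 0)
    (hX : X ∈ line[ℝ, B, C]) (hFX : dist F X = dist F O) :
    dist H X ^ 2 = (R ^ 2 + dist O H ^ 2) / 2 := by
  have hBC : dist O B = dist O C := hB.trans hC.symm
  have hHF := inner_vsub_foot_eq_zero_of_vsub_eq_add hH hBC hAF
  have hpythagoras : dist H X ^ 2 = dist H F ^ 2 + dist F X ^ 2 := by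
    rw [dist_eq_norm_vsub V, dist_eq_norm_vsub V, dist_comm, dist_eq_norm_vsub V,
      ← vsub_sub_vsub_cancel_right H X F, sq, sq, sq,
      norm_sub_sq_eq_norm_sq_add_norm_sq_real
        (inner_vsub_eq_zero_of_mem_affineSpan_pair hHF hX hF)]
  have hapollonius := dist_sq_add_dist_sq_eq_two_mul_dist_midpoint_sq_add_half_dist_sq F O H
  rw [dist_foot_midpoint_eq_half hH hBC hF hAF, hA, dist_comm F H] at hapollonius
  rw [hpythagoras, hFX]
  linear_combination hapollonius

theorem dist_eq_sqrt_of_collinear_of_dist_foot_eq {A B C O H F X : P} {R : ℝ}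
    (hA : dist O A = R) (hB : dist O B = R) (hC : dist O C = R)
    (hH : H -ᵥ O = (A -ᵥ O) + (B -ᵥ O) + (C -ᵥ O)) (hBC : B ≠ C)
    (hF : Collinear ℝ {B, C, F}) (hAF : ⟪A -ᵥ F, B -ᵥ C⟫_ℝ = 0)
    (hX : Collinear ℝ {B, C, X}) (hFX : dist F X = dist F O) :
    dist H X = √((R ^ 2 + dist O H ^ 2) / 2) := by
  have mem_line {Y : P} (hY : Collinear ℝ {B, C, Y}) : Y ∈ line[ℝ, B, C] :=
    hY.mem_affineSpan_of_mem_of_ne (by simp) (by simp) (by simp) hBC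
  rw [← dist_sq_of_mem_affineSpan_pair_of_dist_foot_eq hA hB hC hH (mem_line hF) hAF
    (mem_line hX) hFX, Real.sqrt_sq dist_nonneg]

end

theorem stmt_11_general (A B C O H H₁ H₂ H₃ : EuclideanSpace ℝ (Fin 2))
    (hABC : AffineIndependent ℝ ![A, B, C])
    (R : ℝ)
    (hO : dist O A = R ∧ dist O B = R ∧ dist O C = R)
    (hH : H -ᵥ O = (A -ᵥ O) + (B -ᵥ O) + (C -ᵥ O))
    (hH₁ : Collinear ℝ ({B, C, H₁} : Set (EuclideanSpace ℝ (Fin 2))) ∧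
      inner (𝕜 := ℝ) (A -ᵥ H₁) (B -ᵥ C) = 0)
    (hH₂ : Collinear ℝ ({C, A, H₂} : Set (EuclideanSpace ℝ (Fin 2))) ∧
      inner (𝕜 := ℝ) (B -ᵥ H₂) (C -ᵥ A) = 0)
    (hH₃ : Collinear ℝ ({A, B, H₃} : Set (EuclideanSpace ℝ (Fin 2))) ∧
      inner (𝕜 := ℝ) (C -ᵥ H₃) (A -ᵥ B) = 0) :
    (∀ X : EuclideanSpace ℝ (Fin 2),
      Collinear ℝ ({B, C, X} : Set (EuclideanSpace ℝ (Fin 2))) →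
      dist H₁ X = dist H₁ O →
      dist H X = Real.sqrt ((R ^ 2 + dist O H ^ 2) / 2)) ∧
    (∀ X : EuclideanSpace ℝ (Fin 2),
      Collinear ℝ ({C, A, X} : Set (EuclideanSpace ℝ (Fin 2))) →
      dist H₂ X = dist H₂ O →
      dist H X = Real.sqrt ((R ^ 2 + dist O H ^ 2) / 2)) ∧
    (∀ X : EuclideanSpace ℝ (Fin 2),
      Collinear ℝ ({A, B, X} : Set (EuclideanSpace ℝ (Fin 2))) →
      dist H₃ X = dist H₃ O →
      dist H X = Real.sqrt ((R ^ 2 + dist O H ^ 2) / 2)) := by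
  obtain ⟨hA, hB, hC⟩ := hO
  have hBC : B ≠ C := by simpa using hABC.injective.ne (by decide : (1 : Fin 3) ≠ 2)
  have hCA : C ≠ A := by simpa using hABC.injective.ne (by decide : (2 : Fin 3) ≠ 0)
  have hAB : A ≠ B := by simpa using hABC.injective.ne (by decide : (0 : Fin 3) ≠ 1)
  have hH' : H -ᵥ O = (B -ᵥ O) + (C -ᵥ O) + (A -ᵥ O) := by rw [hH]; abel
  have hH'' : H -ᵥ O = (C -ᵥ O) + (A -ᵥ O) + (B -ᵥ O) := by rw [hH]; abel
  exact ⟨fun X hX hFX => dist_eq_sqrt_of_collinear_of_dist_foot_eq hA hB hC hH hBC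
      hH₁.1 hH₁.2 hX hFX,
    fun X hX hFX => dist_eq_sqrt_of_collinear_of_dist_foot_eq hB hC hA hH' hCA
      hH₂.1 hH₂.2 hX hFX,
    fun X hX hFX => dist_eq_sqrt_of_collinear_of_dist_foot_eq hC hA hB hH'' hAB
      hH₃.1 hH₃.2 hX hFX⟩

/-- In an acute triangle, the circles centered at the altitude feet and passing
through the circumcenter `O` cut the corresponding sides in six points, each at
distance `√((R² + OH²)/2)` from the orthocenter `H`; hence these six points lie
on the first Droz-Farny circle. -/
theorem stmt_11 (A B C O H H₁ H₂ H₃ : EuclideanSpace ℝ (Fin 2))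
    (hABC : AffineIndependent ℝ ![A, B, C])
    (R : ℝ) (hR : 0 < R)
    (hO : dist O A = R ∧ dist O B = R ∧ dist O C = R)
    (hH : H -ᵥ O = (A -ᵥ O) + (B -ᵥ O) + (C -ᵥ O))
    (hacute : ∠ B A C < Real.pi / 2 ∧ ∠ A B C < Real.pi / 2 ∧ ∠ B C A < Real.pi / 2)
    (hH₁ : Collinear ℝ ({B, C, H₁} : Set (EuclideanSpace ℝ (Fin 2))) ∧
      inner (𝕜 := ℝ) (A -ᵥ H₁) (B -ᵥ C) = 0)
    (hH₂ : Collinear ℝ ({C, A, H₂} : Set (EuclideanSpace ℝ (Fin 2))) ∧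
      inner (𝕜 := ℝ) (B -ᵥ H₂) (C -ᵥ A) = 0)
    (hH₃ : Collinear ℝ ({A, B, H₃} : Set (EuclideanSpace ℝ (Fin 2))) ∧
      inner (𝕜 := ℝ) (C -ᵥ H₃) (A -ᵥ B) = 0) :
    (∀ X : EuclideanSpace ℝ (Fin 2),
      Collinear ℝ ({B, C, X} : Set (EuclideanSpace ℝ (Fin 2))) →
      dist H₁ X = dist H₁ O →
      dist H X = Real.sqrt ((R ^ 2 + dist O H ^ 2) / 2)) ∧
    (∀ X : EuclideanSpace ℝ (Fin 2),
      Collinear ℝ ({C, A, X} : Set (EuclideanSpace ℝ (Fin 2))) →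
      dist H₂ X = dist H₂ O →
      dist H X = Real.sqrt ((R ^ 2 + dist O H ^ 2) / 2)) ∧
    (∀ X : EuclideanSpace ℝ (Fin 2),
      Collinear ℝ ({A, B, X} : Set (EuclideanSpace ℝ (Fin 2))) →
      dist H₃ X = dist H₃ O →
      dist H X = Real.sqrt ((R ^ 2 + dist O H ^ 2) / 2)) :=
  stmt_11_general A B C O H H₁ H₂ H₃ hABC R hO hH hH₁ hH₂ hH₃
end

section
/- The circles centered at the midpoints M₁, M₂, M₃ of the sides of triangle ABC passing through the orthocenter H intersect the sides BC, CA, AB in six points all equidistant from the circumcenter O, with common distance R₂ satisfying R₂² = 5R² − (1/2)(a² + b² + c²) (the second Droz-Farny circle). -/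
/-
The circumcenter `O` and the midpoint `M` of `BC` both lie on the perpendicular bisector of `BC`,
so for `X` on the line `BC` Pythagoras gives `OX² = OM² + MX² = OM² + MH²`. Since
`H - M = (A - O) + (M - O)`, the parallelogram law gives `MH² = 2R² + 2OM² - AM²`, and
Apollonius' theorem in the triangles `OBC` and `ABC` expresses `OM²` and `AM²` through the sides.
-/

open EuclideanGeometry RealInnerProductSpace

section

variable {V P : Type*} [NormedAddCommGroup V] [InnerProductSpace ℝ V] [MetricSpace P]
  [NormedAddTorsor V P]

theorem dist_sq_eq_dist_midpoint_sq_add_dist_midpoint_sq {O B C X : P}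
    (hOBC : dist B O = dist C O) (hX : X ∈ line[ℝ, B, C]) :
    dist O X ^ 2 = dist O (midpoint ℝ B C) ^ 2 + dist (midpoint ℝ B C) X ^ 2 := by
  set M := midpoint ℝ B C
  have hM : M ∈ line[ℝ, B, C] := AffineMap.lineMap_mem_affineSpan_pair _ _ _
  obtain ⟨r, hr⟩ : ∃ r : ℝ, r • (B -ᵥ C) = X -ᵥ M := by
    rw [← Submodule.mem_span_singleton, ← vectorSpan_pair, ← direction_affineSpan]
    exact AffineSubspace.vsub_mem_direction hX hM
  have hMBC : dist C M = dist B M :=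
    (dist_right_midpoint B C).trans (dist_left_midpoint B C).symm
  have hperp : ⟪X -ᵥ M, M -ᵥ O⟫ = 0 := by
    rw [← hr, real_inner_smul_left, real_inner_comm,
      inner_vsub_vsub_of_dist_eq_of_dist_eq hOBC.symm hMBC, mul_zero]
  rw [dist_comm O X, dist_comm O M, dist_eq_norm_vsub V X O, dist_eq_norm_vsub V M O,
    dist_eq_norm_vsub' V M X, ← vsub_add_vsub_cancel X M O, sq, sq, sq,
    norm_add_sq_eq_norm_sq_add_norm_sq_real hperp]
  ring

theorem dist_midpoint_sq_of_vsub_eq_add {A B C O H : P}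
    (hH : H -ᵥ O = (A -ᵥ O) + (B -ᵥ O) + (C -ᵥ O)) :
    dist (midpoint ℝ B C) H ^ 2 =
      2 * dist O A ^ 2 + 2 * dist O (midpoint ℝ B C) ^ 2 - dist A (midpoint ℝ B C) ^ 2 := by
  set M := midpoint ℝ B C
  have hHM : H -ᵥ M = (A -ᵥ O) + (M -ᵥ O) := by
    rw [← vsub_sub_vsub_cancel_right H M O, hH, midpoint_vsub, invOf_eq_inv]
    module
  have hAM : A -ᵥ M = (A -ᵥ O) - (M -ᵥ O) := (vsub_sub_vsub_cancel_right A M O).symm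
  have := parallelogram_law_with_norm ℝ (A -ᵥ O) (M -ᵥ O)
  rw [← hHM, ← hAM, ← dist_eq_norm_vsub, ← dist_eq_norm_vsub, ← dist_eq_norm_vsub,
    ← dist_eq_norm_vsub, dist_comm H, dist_comm A O, dist_comm M O] at this
  linarith

theorem dist_sq_eq_droz_farny_of_mem_line {A B C O H X : P} {R : ℝ} (hBC : B ≠ C)
    (hOA : dist O A = R) (hOB : dist O B = R) (hOC : dist O C = R)
    (hH : H -ᵥ O = (A -ᵥ O) + (B -ᵥ O) + (C -ᵥ O))
    (hcol : Collinear ℝ ({B, C, X} : Set P))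
    (hX : dist (midpoint ℝ B C) X = dist (midpoint ℝ B C) H) :
    dist O X ^ 2 = 5 * R ^ 2 - (1 / 2) * (dist B C ^ 2 + dist C A ^ 2 + dist A B ^ 2) := by
  have hXBC : X ∈ line[ℝ, B, C] :=
    hcol.mem_affineSpan_of_mem_of_ne (by simp) (by simp) (by simp) hBC
  have hOBC : dist B O = dist C O := by rw [dist_comm B, dist_comm C, hOB, hOC]
  have apollonius_O := dist_sq_add_dist_sq_eq_two_mul_dist_midpoint_sq_add_half_dist_sq O B C
  have apollonius_A := dist_sq_add_dist_sq_eq_two_mul_dist_midpoint_sq_add_half_dist_sq A B C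
  rw [dist_sq_eq_dist_midpoint_sq_add_dist_midpoint_sq hOBC hXBC, hX,
    dist_midpoint_sq_of_vsub_eq_add hH, hOA]
  rw [hOB, hOC] at apollonius_O
  rw [dist_comm A C] at apollonius_A
  linarith

end

theorem stmt_12_general (A B C O H : EuclideanSpace ℝ (Fin 2))
    (hABC : AffineIndependent ℝ ![A, B, C])
    (a b c R : ℝ) (ha : a = dist B C) (hb : b = dist C A) (hc : c = dist A B)
    (hO : dist O A = R ∧ dist O B = R ∧ dist O C = R)
    (hH : H -ᵥ O = (A -ᵥ O) + (B -ᵥ O) + (C -ᵥ O)) :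
    (∀ X : EuclideanSpace ℝ (Fin 2),
      Collinear ℝ ({B, C, X} : Set (EuclideanSpace ℝ (Fin 2))) →
      dist (midpoint ℝ B C) X = dist (midpoint ℝ B C) H →
      dist O X ^ 2 = 5 * R ^ 2 - (1 / 2) * (a ^ 2 + b ^ 2 + c ^ 2)) ∧
    (∀ X : EuclideanSpace ℝ (Fin 2),
      Collinear ℝ ({C, A, X} : Set (EuclideanSpace ℝ (Fin 2))) →
      dist (midpoint ℝ C A) X = dist (midpoint ℝ C A) H →
      dist O X ^ 2 = 5 * R ^ 2 - (1 / 2) * (a ^ 2 + b ^ 2 + c ^ 2)) ∧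
    (∀ X : EuclideanSpace ℝ (Fin 2),
      Collinear ℝ ({A, B, X} : Set (EuclideanSpace ℝ (Fin 2))) →
      dist (midpoint ℝ A B) X = dist (midpoint ℝ A B) H →
      dist O X ^ 2 = 5 * R ^ 2 - (1 / 2) * (a ^ 2 + b ^ 2 + c ^ 2)) := by
  subst ha hb hc
  obtain ⟨hOA, hOB, hOC⟩ := hO
  have hAB : A ≠ B := by simpa using hABC.injective.ne (show (0 : Fin 3) ≠ 1 by decide)
  have hBC : B ≠ C := by simpa using hABC.injective.ne (show (1 : Fin 3) ≠ 2 by decide)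
  have hCA : C ≠ A := by simpa using hABC.injective.ne (show (2 : Fin 3) ≠ 0 by decide)
  refine ⟨fun X hcol hX => ?_, fun X hcol hX => ?_, fun X hcol hX => ?_⟩
  · exact dist_sq_eq_droz_farny_of_mem_line hBC hOA hOB hOC hH hcol hX
  · rw [dist_sq_eq_droz_farny_of_mem_line hCA hOB hOC hOA (by rw [hH]; abel) hcol hX]
    ring
  · rw [dist_sq_eq_droz_farny_of_mem_line hAB hOC hOA hOB (by rw [hH]; abel) hcol hX]
    ring

/-- The circles centered at the side midpoints `M₁, M₂, M₃` and passing through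
the orthocenter `H` cut the corresponding sides in six points all equidistant
from the circumcenter `O`, with common squared distance
`R₂² = 5R² − (a²+b²+c²)/2` (the second Droz-Farny circle). -/
theorem stmt_12 (A B C O H : EuclideanSpace ℝ (Fin 2))
    (hABC : AffineIndependent ℝ ![A, B, C])
    (a b c R : ℝ) (ha : a = dist B C) (hb : b = dist C A) (hc : c = dist A B)
    (hR : 0 < R) (hO : dist O A = R ∧ dist O B = R ∧ dist O C = R)
    (hH : H -ᵥ O = (A -ᵥ O) + (B -ᵥ O) + (C -ᵥ O)) :
    (∀ X : EuclideanSpace ℝ (Fin 2),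
      Collinear ℝ ({B, C, X} : Set (EuclideanSpace ℝ (Fin 2))) →
      dist (midpoint ℝ B C) X = dist (midpoint ℝ B C) H →
      dist O X ^ 2 = 5 * R ^ 2 - (1 / 2) * (a ^ 2 + b ^ 2 + c ^ 2)) ∧
    (∀ X : EuclideanSpace ℝ (Fin 2),
      Collinear ℝ ({C, A, X} : Set (EuclideanSpace ℝ (Fin 2))) →
      dist (midpoint ℝ C A) X = dist (midpoint ℝ C A) H →
      dist O X ^ 2 = 5 * R ^ 2 - (1 / 2) * (a ^ 2 + b ^ 2 + c ^ 2)) ∧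
    (∀ X : EuclideanSpace ℝ (Fin 2),
      Collinear ℝ ({A, B, X} : Set (EuclideanSpace ℝ (Fin 2))) →
      dist (midpoint ℝ A B) X = dist (midpoint ℝ A B) H →
      dist O X ^ 2 = 5 * R ^ 2 - (1 / 2) * (a ^ 2 + b ^ 2 + c ^ 2)) :=
  stmt_12_general A B C O H hABC a b c R ha hb hc hO hH
end

section
/- Every Apollonius circle of rank k of a triangle ABC is orthogonal to the circumcircle of ABC: if U is a common point of the circumcircle and the Apollonius circle of rank k relative to BC, then the tangent line to the Apollonius circle at U passes through the circumcenter O (equivalently OU is tangent to the Apollonius circle, so OO_{A_k}² = R² + ρ² where O_{A_k}, ρ are the Apollonius circle's center and radius). -/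
/-!
Write `Ak = lineMap B C s` and `Ak' = lineMap B C s'`. Equal ratios `BAk/AkC = BAk'/Ak'C`
with `Ak` inside and `Ak'` outside the segment make them harmonic conjugates, i.e.
`s + s' = 2 s s'`. For any point `O` with `OB = OC = R` this gives `⟪O - Ak, O - Ak'⟫ = R²`,
and that inner product is the power of `O` with respect to the circle on diameter `AkAk'`.
So `OO_{A_k}² = R² + ρ²`, and at a common point `U` the law of cosines turns this into
`OU ⊥ O_{A_k}U`.
-/

open AffineMap EuclideanGeometry RealInnerProductSpace Set

section HarmonicConjugates

variable {V P : Type*} [NormedAddCommGroup V] [InnerProductSpace ℝ V] [MetricSpace P]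
  [NormedAddTorsor V P]

theorem dist_sq_eq_dist_sq_add_dist_sq_sub_two_mul_inner (a b c : P) :
    dist b c ^ 2 = dist a b ^ 2 + dist a c ^ 2 - 2 * ⟪b -ᵥ a, c -ᵥ a⟫ := by
  rw [dist_eq_norm_vsub V b c, ← vsub_sub_vsub_cancel_right b c a, norm_sub_sq_real,
    dist_comm a b, dist_comm a c, dist_eq_norm_vsub V b, dist_eq_norm_vsub V c]
  ring

theorem dist_midpoint_sq_eq_inner_add (o p q : P) :
    dist o (midpoint ℝ p q) ^ 2 = ⟪o -ᵥ p, o -ᵥ q⟫ + (dist p q / 2) ^ 2 := by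
  have hapollonius := dist_sq_add_dist_sq_eq_two_mul_dist_midpoint_sq_add_half_dist_sq o p q
  have hcos := dist_sq_eq_dist_sq_add_dist_sq_sub_two_mul_inner o p q
  rw [← neg_vsub_eq_vsub_rev o p, ← neg_vsub_eq_vsub_rev o q, inner_neg_neg] at hcos
  linarith

theorem dist_left_lineMap_div_dist_lineMap_right {b c : P} (hbc : b ≠ c) (s : ℝ) :
    dist b (lineMap b c s) / dist (lineMap b c s) c = |s| / |1 - s| := by
  rw [dist_left_lineMap, dist_lineMap_right, Real.norm_eq_abs, Real.norm_eq_abs,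
    mul_div_mul_right _ _ (dist_ne_zero.2 hbc)]

theorem add_eq_two_mul_mul_of_abs_div_eq {s s' : ℝ} (hs : s ∈ Ioo 0 1) (hs' : s' ∉ Icc 0 1)
    (h : |s| / |1 - s| = |s'| / |1 - s'|) : s + s' = 2 * s * s' := by
  obtain ⟨hs0, hs1⟩ := hs
  rw [abs_of_pos hs0, abs_of_pos (sub_pos.2 hs1)] at h
  rcases not_and_or.1 hs' with hneg | hgt
  · rw [not_le] at hneg
    rw [abs_of_neg hneg, abs_of_pos (by linarith),
      div_eq_div_iff (by linarith) (by linarith)] at h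
    linarith
  · rw [not_le] at hgt
    rw [abs_of_pos (by linarith), abs_of_neg (by linarith),
      div_eq_div_iff (by linarith) (by linarith)] at h
    linarith

theorem inner_vsub_lineMap_vsub_lineMap_eq_dist_sq {o b c : P} (hobc : dist o b = dist o c)
    {s s' : ℝ} (hss' : s + s' = 2 * s * s') :
    ⟪o -ᵥ lineMap b c s, o -ᵥ lineMap b c s'⟫ = dist o b ^ 2 := by
  have hcos := dist_sq_eq_dist_sq_add_dist_sq_sub_two_mul_inner b o c
  rw [dist_comm b o, ← hobc, dist_eq_norm_vsub V b c, ← norm_neg, neg_vsub_eq_vsub_rev] at hcos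
  rw [lineMap_apply, lineMap_apply, vsub_vadd_eq_vsub_sub, vsub_vadd_eq_vsub_sub,
    dist_eq_norm_vsub V o b]
  simp only [inner_sub_left, inner_sub_right, real_inner_smul_left, real_inner_smul_right,
    real_inner_self_eq_norm_sq, real_inner_comm (o -ᵥ b) (c -ᵥ b)]
  linear_combination -(s * s') * hcos - ⟪o -ᵥ b, c -ᵥ b⟫ * hss'

theorem inner_vsub_vsub_eq_dist_sq_of_dist_div_eq {o b c p q : P} (hobc : dist o b = dist o c)
    (hp : Sbtw ℝ b p c) (hq : Collinear ℝ {b, c, q}) (hq' : ¬ Wbtw ℝ b q c)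
    (hpq : dist b p / dist p c = dist b q / dist q c) :
    ⟪o -ᵥ p, o -ᵥ q⟫ = dist o b ^ 2 := by
  have hbc : b ≠ c := hp.left_ne_right
  obtain ⟨⟨s, hs, rfl⟩, -⟩ := sbtw_iff_mem_image_Ioo_and_ne.1 hp
  obtain ⟨s', rfl⟩ := mem_affineSpan_pair_iff_exists_lineMap_eq.1
    (hq.mem_affineSpan_of_mem_of_ne (p₃ := q) (by simp) (by simp) (by simp) hbc)
  have hs' : s' ∉ Icc 0 1 := fun h => hq' ⟨s', h, rfl⟩
  rw [dist_left_lineMap_div_dist_lineMap_right hbc,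
    dist_left_lineMap_div_dist_lineMap_right hbc] at hpq
  exact inner_vsub_lineMap_vsub_lineMap_eq_dist_sq hobc
    (add_eq_two_mul_mul_of_abs_div_eq hs hs' hpq)

end HarmonicConjugates

theorem stmt_15_general (A B C O U Ak Ak' : EuclideanSpace ℝ (Fin 2)) (k R : ℝ)
    (hO : dist O A = R ∧ dist O B = R ∧ dist O C = R)
    (hAk : Sbtw ℝ B Ak C)
    (hAkr : dist B Ak / dist Ak C = (dist A B / dist A C) ^ k)
    (hAk' : Collinear ℝ ({B, C, Ak'} : Set (EuclideanSpace ℝ (Fin 2))))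
    (hAk'out : Ak' ∉ segment ℝ B C)
    (hAk'r : dist B Ak' / dist Ak' C = (dist A B / dist A C) ^ k)
    (hU1 : dist O U = R)
    (hU2 : dist (midpoint ℝ Ak Ak') U = dist Ak Ak' / 2) :
    inner (𝕜 := ℝ) (O -ᵥ U) (midpoint ℝ Ak Ak' -ᵥ U) = 0 ∧
    dist O (midpoint ℝ Ak Ak') ^ 2 = R ^ 2 + (dist Ak Ak' / 2) ^ 2 := by
  obtain ⟨-, hOB, hOC⟩ := hO
  have hpower : ⟪O -ᵥ Ak, O -ᵥ Ak'⟫ = R ^ 2 := by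
    rw [← hOB]
    exact inner_vsub_vsub_eq_dist_sq_of_dist_div_eq (hOB.trans hOC.symm) hAk hAk'
      (by rwa [mem_segment_iff_wbtw] at hAk'out) (hAkr.trans hAk'r.symm)
  have hcenter : dist O (midpoint ℝ Ak Ak') ^ 2 = R ^ 2 + (dist Ak Ak' / 2) ^ 2 := by
    rw [dist_midpoint_sq_eq_inner_add, hpower]
  refine ⟨?_, hcenter⟩
  have hcos := dist_sq_eq_dist_sq_add_dist_sq_sub_two_mul_inner U O (midpoint ℝ Ak Ak')
  rw [dist_comm U O, dist_comm U, hU1, hU2, hcenter] at hcos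
  linarith

/-- Every Apollonius circle of rank `k` is orthogonal to the circumcircle: at a
common point `U` the radii are perpendicular (so the tangent to the Apollonius
circle at `U` passes through the circumcenter `O`), and
`O O_{A_k}² = R² + ρ²` where `O_{A_k} = midpoint Ak Ak'` and `ρ = AkAk'/2`. -/
theorem stmt_15 (A B C O U Ak Ak' : EuclideanSpace ℝ (Fin 2)) (k R : ℝ)
    (hABC : AffineIndependent ℝ ![A, B, C])
    (hne : dist A B ≠ dist A C)
    (hR : 0 < R) (hO : dist O A = R ∧ dist O B = R ∧ dist O C = R)
    (hAk : Sbtw ℝ B Ak C)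
    (hAkr : dist B Ak / dist Ak C = (dist A B / dist A C) ^ k)
    (hAk' : Collinear ℝ ({B, C, Ak'} : Set (EuclideanSpace ℝ (Fin 2))))
    (hAk'out : Ak' ∉ segment ℝ B C)
    (hAk'r : dist B Ak' / dist Ak' C = (dist A B / dist A C) ^ k)
    (hU1 : dist O U = R)
    (hU2 : dist (midpoint ℝ Ak Ak') U = dist Ak Ak' / 2) :
    inner (𝕜 := ℝ) (O -ᵥ U) (midpoint ℝ Ak Ak' -ᵥ U) = 0 ∧
    dist O (midpoint ℝ Ak Ak') ^ 2 = R ^ 2 + (dist Ak Ak' / 2) ^ 2 :=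
  stmt_15_general A B C O U Ak Ak' k R hO hAk hAkr hAk' hAk'out hAk'r hU1 hU2
end

section
/- In a harmonic quadrilateral ABCD with sides of lengths a, b, c, d and area S, for any interior point M with distances x, y, z, u to the four sides, one has x² + y² + z² + u² ≥ 4S²/(a² + b² + c² + d²), with equality if and only if x/a = y/b = z/c = u/d; the equality point is the intersection of the diagonals. -/
/-!
The inequality is Cauchy–Schwarz for `(a, b, c, d)` and `(x, y, z, u)`, and Lagrange's identity
turns its defect into a sum of squares `(a y - b x)² + ⋯`, which vanishes exactly when
`x / a = y / b = z / c = u / d`.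

For the diagonal point `K = AC ∩ BD` write `K = (1 - t) A + t C`. The distances from `K` to `AB`
and to `BC` are `t` and `1 - t` times the heights of `C` and `A` in triangle `ABC`, and
`t : (1 - t) = [ABD] : [CBD] = AB·AD : CB·CD` because `abc = 4 R · area` in the two triangles
inscribed in the same circle. The harmonic condition `AB·CD = BC·AD` makes this ratio `AB² : BC²`,
hence `dist(K, AB) / AB = dist(K, BC) / BC`; the other two equalities are the same statement for
the relabelled quadrilaterals `BCDA` and `CDAB`.
-/

open Metric Module AffineMap
open scoped RealInnerProductSpace

theorem lagrange_identity_four (a b c d x y z u : ℝ) :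
    (a ^ 2 + b ^ 2 + c ^ 2 + d ^ 2) * (x ^ 2 + y ^ 2 + z ^ 2 + u ^ 2)
        - (a * x + b * y + c * z + d * u) ^ 2 =
      (a * y - b * x) ^ 2 + (a * z - c * x) ^ 2 + (a * u - d * x) ^ 2 + (b * z - c * y) ^ 2
        + (b * u - d * y) ^ 2 + (c * u - d * z) ^ 2 := by
  ring

theorem sq_div_le_sum_sq (a b c d x y z u : ℝ) :
    (a * x + b * y + c * z + d * u) ^ 2 / (a ^ 2 + b ^ 2 + c ^ 2 + d ^ 2) ≤
      x ^ 2 + y ^ 2 + z ^ 2 + u ^ 2 := by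
  refine div_le_of_le_mul₀ (by positivity) (by positivity) ?_
  rw [← sub_nonneg, mul_comm, lagrange_identity_four]
  positivity

theorem sum_sq_eq_sq_div_iff {a b c d : ℝ} (x y z u : ℝ)
    (ha : a ≠ 0) (hb : b ≠ 0) (hc : c ≠ 0) (hd : d ≠ 0) :
    x ^ 2 + y ^ 2 + z ^ 2 + u ^ 2 =
        (a * x + b * y + c * z + d * u) ^ 2 / (a ^ 2 + b ^ 2 + c ^ 2 + d ^ 2) ↔
      x / a = y / b ∧ y / b = z / c ∧ z / c = u / d := by
  have hT : a ^ 2 + b ^ 2 + c ^ 2 + d ^ 2 ≠ 0 := by positivity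
  rw [eq_div_iff hT, ← sub_eq_zero, mul_comm, lagrange_identity_four]
  constructor
  · intro h
    have h₁ := sq_nonneg (a * y - b * x)
    have h₂ := sq_nonneg (a * z - c * x)
    have h₃ := sq_nonneg (a * u - d * x)
    have h₄ := sq_nonneg (b * z - c * y)
    have h₅ := sq_nonneg (b * u - d * y)
    have h₆ := sq_nonneg (c * u - d * z)
    have e₁ : a * y - b * x = 0 := pow_eq_zero_iff two_ne_zero |>.1 (by linarith)
    have e₄ : b * z - c * y = 0 := pow_eq_zero_iff two_ne_zero |>.1 (by linarith)
    have e₆ : c * u - d * z = 0 := pow_eq_zero_iff two_ne_zero |>.1 (by linarith)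
    refine ⟨?_, ?_, ?_⟩
    · rw [div_eq_div_iff ha hb]; linarith
    · rw [div_eq_div_iff hb hc]; linarith
    · rw [div_eq_div_iff hc hd]; linarith
  · rintro ⟨h₁, h₂, h₃⟩
    obtain ⟨k, hk⟩ : ∃ k, x / a = k := ⟨_, rfl⟩
    have hx : x = k * a := by rw [← hk, div_mul_cancel₀ x ha]
    have hy : y = k * b := by rw [← hk, h₁, div_mul_cancel₀ y hb]
    have hz : z = k * c := by rw [← hk, h₁, h₂, div_mul_cancel₀ z hc]
    have hu : u = k * d := by rw [← hk, h₁, h₂, h₃, div_mul_cancel₀ u hd]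
    rw [hx, hy, hz, hu]
    ring

namespace Orientation

variable {V : Type*} [NormedAddCommGroup V] [InnerProductSpace ℝ V] [Fact (finrank ℝ V = 2)]
  (o : Orientation ℝ V (Fin 2))

local notation "ω" => o.areaForm

theorem areaForm_lineMap_sub (v P Q X : V) (t : ℝ) :
    ω v (lineMap P Q t - X) = (1 - t) * ω v (P - X) + t * ω v (Q - X) := by
  have h : lineMap P Q t - X = (1 - t) • (P - X) + t • (Q - X) := by
    rw [lineMap_apply_module]; module
  simp [h]

theorem areaForm_sub_sub_rotate (A B C : V) : ω (B - A) (C - A) = ω (C - B) (A - B) := by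
  simp only [map_sub, LinearMap.sub_apply, areaForm_apply_self]
  linear_combination o.areaForm_swap B C - o.areaForm_swap A C

theorem infDist_affineSpan_pair_mul_dist (P A B : V) :
    infDist P (affineSpan ℝ {A, B}) * dist A B = |ω (B - A) (P - A)| := by
  have := FiniteDimensional.of_fact_finrank_eq_two (K := ℝ) (V := V)
  set s := affineSpan ℝ ({A, B} : Set V)
  have : Nonempty s := ⟨⟨A, left_mem_affineSpan_pair ℝ A B⟩⟩
  set H := (EuclideanGeometry.orthogonalProjection s P : V)
  have hperp : ⟪B - A, P - H⟫ = 0 :=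
    Submodule.inner_right_of_mem_orthogonal
      (AffineSubspace.vsub_mem_direction (right_mem_affineSpan_pair ℝ A B)
        (left_mem_affineSpan_pair ℝ A B))
      (EuclideanGeometry.vsub_orthogonalProjection_mem_direction_orthogonal s P)
  obtain ⟨r, hr⟩ : ∃ r : ℝ, r • (B - A) = H - A := by
    rw [← vsub_eq_sub, ← vsub_eq_sub, ← mem_vectorSpan_pair_rev, ← direction_affineSpan]
    exact AffineSubspace.vsub_mem_direction (EuclideanGeometry.orthogonalProjection_mem P)
      (left_mem_affineSpan_pair ℝ A B)
  have hPA : P - A = (P - H) + r • (B - A) := by rw [hr]; abel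
  rw [← EuclideanGeometry.dist_orthogonalProjection_eq_infDist, hPA, map_add, map_smul]
  simp only [areaForm_apply_self, smul_zero, add_zero, o.abs_areaForm_of_orthogonal hperp,
    dist_eq_norm, norm_sub_rev A B]
  ring

-- The Gram determinant of three vectors in a plane vanishes.
theorem norm_sq_mul_areaForm_sq (u p q : V) :
    ‖u‖ ^ 2 * ω p q ^ 2 =
      ⟪u, p⟫ ^ 2 * ‖q‖ ^ 2 - 2 * ⟪u, p⟫ * ⟪u, q⟫ * ⟪p, q⟫ + ⟪u, q⟫ ^ 2 * ‖p‖ ^ 2 := by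
  rcases eq_or_ne u 0 with rfl | hu
  · simp
  apply mul_left_cancel₀ (pow_ne_zero 2 (norm_ne_zero_iff.2 hu))
  have h₁ := o.inner_mul_areaForm_sub u p q
  have h₂ := o.inner_sq_add_areaForm_sq u p
  have h₃ := o.inner_sq_add_areaForm_sq u q
  have h₄ := o.inner_mul_inner_add_areaForm_mul_areaForm u p q
  linear_combination (-(‖u‖ ^ 2 * ω p q) - (⟪u, p⟫ * ω u q - ω u p * ⟪u, q⟫)) * h₁
    + ⟪u, q⟫ ^ 2 * h₂ + ⟪u, p⟫ ^ 2 * h₃ - 2 * ⟪u, p⟫ * ⟪u, q⟫ * h₄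

theorem abs_areaForm_mul_two_mul_radius {O A B C : V} {R : ℝ}
    (hA : dist O A = R) (hB : dist O B = R) (hC : dist O C = R) :
    |ω (B - A) (C - A)| * (2 * R) = dist A B * dist B C * dist C A := by
  subst hA
  set u := O - A
  set p := B - A
  set q := C - A
  have hp : ‖u - p‖ ^ 2 = ‖u‖ ^ 2 := by simp [u, p, ← dist_eq_norm, hB]
  have hq : ‖u - q‖ ^ 2 = ‖u‖ ^ 2 := by simp [u, q, ← dist_eq_norm, hC]
  rw [norm_sub_sq_real] at hp hq
  have hpq := norm_sub_sq_real p q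
  have key := o.norm_sq_mul_areaForm_sq u p q
  have hAB : dist A B = ‖p‖ := by rw [dist_comm, dist_eq_norm]
  have hBC : dist B C = ‖p - q‖ := by rw [dist_eq_norm, sub_sub_sub_cancel_right]
  have hCA : dist C A = ‖q‖ := dist_eq_norm C A
  rw [hAB, hBC, hCA, dist_eq_norm, ← pow_left_inj₀ (by positivity) (by positivity) two_ne_zero]
  rw [mul_pow, mul_pow, mul_pow, mul_pow, sq_abs, hpq]
  linear_combination 4 * key
    - ((2 * ⟪u, p⟫ + ‖p‖ ^ 2) * ‖q‖ ^ 2 - 4 * ⟪p, q⟫ * ⟪u, q⟫) * hp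
    - (‖p‖ ^ 2 * (2 * ⟪u, q⟫ + ‖q‖ ^ 2) - 2 * ⟪p, q⟫ * ‖p‖ ^ 2) * hq

theorem areaForm_sub_add_areaForm_sub_of_lineMap_eq {A B C D : V} {t s : ℝ}
    (h : lineMap A C t = lineMap B D s) :
    (1 - t) * ω (D - B) (A - B) + t * ω (D - B) (C - B) = 0 := by
  rw [← areaForm_lineMap_sub, h, areaForm_lineMap_sub, sub_self, areaForm_apply_self, map_zero,
    mul_zero, mul_zero, add_zero]

theorem infDist_lineMap_mul_dist (P Q X Y : V) (t : ℝ) :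
    infDist (lineMap P Q t) (affineSpan ℝ {X, Y}) * dist X Y =
      |(1 - t) * ω (Y - X) (P - X) + t * ω (Y - X) (Q - X)| := by
  rw [infDist_affineSpan_pair_mul_dist, areaForm_lineMap_sub]

end Orientation

section CyclicQuadrilateral

variable {V : Type*} [NormedAddCommGroup V] [InnerProductSpace ℝ V] [Fact (finrank ℝ V = 2)]

theorem nonempty_orientation_of_finrank_eq_two : Nonempty (Orientation ℝ V (Fin 2)) :=
  have := FiniteDimensional.of_fact_finrank_eq_two (K := ℝ) (V := V)
  ⟨(finBasisOfFinrankEq ℝ V Fact.out).orientation⟩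

theorem one_sub_mul_dist_mul_dist_eq_of_lineMap_eq {O A B C D : V} {R t s : ℝ}
    (hA : dist O A = R) (hB : dist O B = R) (hC : dist O C = R) (hD : dist O D = R)
    (hBD : B ≠ D) (ht₀ : 0 ≤ t) (ht₁ : t ≤ 1) (h : lineMap A C t = lineMap B D s) :
    (1 - t) * (dist A B * dist A D) = t * (dist C B * dist C D) := by
  obtain ⟨o⟩ := nonempty_orientation_of_finrank_eq_two (V := V)
  have harea :=
    congrArg abs (eq_neg_of_add_eq_zero_left (o.areaForm_sub_add_areaForm_sub_of_lineMap_eq h))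
  rw [abs_neg, abs_mul, abs_mul, abs_of_nonneg ht₀, abs_of_nonneg (sub_nonneg.2 ht₁)] at harea
  have hBDA := o.abs_areaForm_mul_two_mul_radius hB hD hA
  have hBDC := o.abs_areaForm_mul_two_mul_radius hB hD hC
  apply mul_left_cancel₀ (dist_ne_zero.2 hBD)
  rw [dist_comm A D, dist_comm C D]
  linear_combination 2 * R * harea - (1 - t) * hBDA + t * hBDC

-- The diagonal `BD` of a harmonic quadrilateral is the `B`-symmedian of triangle `ABC`.
theorem infDist_div_dist_eq_of_harmonic {O A B C D K : V} {R : ℝ}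
    (hA : dist O A = R) (hB : dist O B = R) (hC : dist O C = R) (hD : dist O D = R)
    (hharm : dist A B * dist C D = dist B C * dist A D)
    (hAB : A ≠ B) (hBC : B ≠ C) (hCD : C ≠ D) (hBD : B ≠ D)
    (hK₁ : Wbtw ℝ A K C) (hK₂ : Wbtw ℝ B K D) :
    infDist K (affineSpan ℝ {A, B}) / dist A B =
      infDist K (affineSpan ℝ {B, C}) / dist B C := by
  obtain ⟨o⟩ := nonempty_orientation_of_finrank_eq_two (V := V)
  obtain ⟨t, ⟨ht₀, ht₁⟩, rfl⟩ := hK₁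
  obtain ⟨s, -, hs⟩ := hK₂
  have hsection := one_sub_mul_dist_mul_dist_eq_of_lineMap_eq hA hB hC hD hBD ht₀ ht₁ hs.symm
  rw [dist_comm C B] at hsection
  set Δ := |o.areaForm (B - A) (C - A)|
  have hdAB : infDist (lineMap A C t) (affineSpan ℝ {A, B}) * dist A B = t * Δ := by
    rw [o.infDist_lineMap_mul_dist, sub_self, map_zero, mul_zero, zero_add, abs_mul,
      abs_of_nonneg ht₀]
  have hdBC : infDist (lineMap A C t) (affineSpan ℝ {B, C}) * dist B C = (1 - t) * Δ := by
    rw [o.infDist_lineMap_mul_dist, o.areaForm_apply_self, mul_zero, add_zero, abs_mul,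
      abs_of_nonneg (sub_nonneg.2 ht₁), ← o.areaForm_sub_sub_rotate]
  -- `AK : KC = AB·AD : CB·CD`, which the harmonic condition turns into `AB² : BC²`.
  have hratio : t * dist B C ^ 2 = (1 - t) * dist A B ^ 2 := by
    apply mul_left_cancel₀ (dist_ne_zero.2 hCD)
    linear_combination (-dist B C) * hsection - (1 - t) * dist A B * hharm
  rw [div_eq_div_iff (dist_ne_zero.2 hAB) (dist_ne_zero.2 hBC)]
  apply mul_left_cancel₀ (mul_ne_zero (dist_ne_zero.2 hAB) (dist_ne_zero.2 hBC))
  linear_combination dist B C ^ 2 * hdAB - dist A B ^ 2 * hdBC + Δ * hratio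

end CyclicQuadrilateral

theorem stmt_17_general (A B C D K O : EuclideanSpace ℝ (Fin 2))
    (a b c d R S x y z u : ℝ)
    (hABC : AffineIndependent ℝ ![A, B, C])
    (ha : a = dist A B) (hb : b = dist B C) (hc : c = dist C D) (hd : d = dist D A)
    (hcirc : dist O A = R ∧ dist O B = R ∧ dist O C = R ∧ dist O D = R)
    (hharm : dist A B * dist C D = dist B C * dist A D)
    (hK1 : Sbtw ℝ A K C) (hK2 : Sbtw ℝ B K D)
    (hsum : a * x + b * y + c * z + d * u = 2 * S) :
    x ^ 2 + y ^ 2 + z ^ 2 + u ^ 2 ≥ 4 * S ^ 2 / (a ^ 2 + b ^ 2 + c ^ 2 + d ^ 2) ∧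
    (x ^ 2 + y ^ 2 + z ^ 2 + u ^ 2 = 4 * S ^ 2 / (a ^ 2 + b ^ 2 + c ^ 2 + d ^ 2) ↔
      (x / a = y / b ∧ y / b = z / c ∧ z / c = u / d)) ∧
    (infDist K (affineSpan ℝ ({A, B} : Set (EuclideanSpace ℝ (Fin 2)))) / a =
        infDist K (affineSpan ℝ ({B, C} : Set (EuclideanSpace ℝ (Fin 2)))) / b ∧
      infDist K (affineSpan ℝ ({B, C} : Set (EuclideanSpace ℝ (Fin 2)))) / b =
        infDist K (affineSpan ℝ ({C, D} : Set (EuclideanSpace ℝ (Fin 2)))) / c ∧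
      infDist K (affineSpan ℝ ({C, D} : Set (EuclideanSpace ℝ (Fin 2)))) / c =
        infDist K (affineSpan ℝ ({D, A} : Set (EuclideanSpace ℝ (Fin 2)))) / d) := by
  have : Fact (finrank ℝ (EuclideanSpace ℝ (Fin 2)) = 2) := ⟨finrank_euclideanSpace_fin⟩
  obtain ⟨hOA, hOB, hOC, hOD⟩ := hcirc
  have hAB : A ≠ B := fun h ↦ hABC.injective.ne (by decide : (0 : Fin 3) ≠ 1) (by simp [h])
  have hBC : B ≠ C := fun h ↦ hABC.injective.ne (by decide : (1 : Fin 3) ≠ 2) (by simp [h])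
  have hCA : C ≠ A := fun h ↦ hABC.injective.ne (by decide : (2 : Fin 3) ≠ 0) (by simp [h])
  have hCD : C ≠ D := by
    rintro rfl
    rw [dist_self, mul_zero] at hharm
    exact mul_ne_zero (dist_ne_zero.2 hBC) (dist_ne_zero.2 hCA.symm) hharm.symm
  have hDA : D ≠ A := by
    rintro rfl
    rw [dist_self, mul_zero] at hharm
    exact mul_ne_zero (dist_ne_zero.2 hAB) (dist_ne_zero.2 hCD) hharm
  have hsq : 4 * S ^ 2 = (a * x + b * y + c * z + d * u) ^ 2 := by rw [hsum]; ring
  subst ha hb hc hd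
  rw [hsq]
  refine ⟨sq_div_le_sum_sq .., sum_sq_eq_sq_div_iff x y z u (dist_ne_zero.2 hAB)
    (dist_ne_zero.2 hBC) (dist_ne_zero.2 hCD) (dist_ne_zero.2 hDA), ?_, ?_, ?_⟩
  · exact infDist_div_dist_eq_of_harmonic hOA hOB hOC hOD hharm hAB hBC hCD
      hK2.left_ne_right hK1.wbtw hK2.wbtw
  · refine infDist_div_dist_eq_of_harmonic hOB hOC hOD hOA ?_ hBC hCD hDA hCA
      hK2.wbtw hK1.symm.wbtw
    rw [dist_comm D A, dist_comm B A]; linarith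
  · refine infDist_div_dist_eq_of_harmonic hOC hOD hOA hOB ?_ hCD hDA hAB hK2.left_ne_right.symm
      hK1.symm.wbtw hK2.symm.wbtw
    rw [dist_comm D A, dist_comm C B]; linarith

/-- In a harmonic quadrilateral `ABCD` with sides `a, b, c, d` and area `S`, for
any interior point `M` with distances `x, y, z, u` to the four sides (so that
`ax + by + cz + du = 2S`) one has `x²+y²+z²+u² ≥ 4S²/(a²+b²+c²+d²)`, with
equality iff `x/a = y/b = z/c = u/d`; and the diagonal intersection point `K`
has distances to the sides proportional to the side lengths. -/
theorem stmt_17 (A B C D K O : EuclideanSpace ℝ (Fin 2))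
    (a b c d R S x y z u : ℝ)
    (hABC : AffineIndependent ℝ ![A, B, C])
    (ha : a = dist A B) (hb : b = dist B C) (hc : c = dist C D) (hd : d = dist D A)
    (hR : 0 < R)
    (hcirc : dist O A = R ∧ dist O B = R ∧ dist O C = R ∧ dist O D = R)
    (hharm : dist A B * dist C D = dist B C * dist A D)
    (hK1 : Sbtw ℝ A K C) (hK2 : Sbtw ℝ B K D)
    (hS : 0 < S)
    (hx : 0 ≤ x) (hy : 0 ≤ y) (hz : 0 ≤ z) (hu : 0 ≤ u)
    (hsum : a * x + b * y + c * z + d * u = 2 * S) :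
    x ^ 2 + y ^ 2 + z ^ 2 + u ^ 2 ≥ 4 * S ^ 2 / (a ^ 2 + b ^ 2 + c ^ 2 + d ^ 2) ∧
    (x ^ 2 + y ^ 2 + z ^ 2 + u ^ 2 = 4 * S ^ 2 / (a ^ 2 + b ^ 2 + c ^ 2 + d ^ 2) ↔
      (x / a = y / b ∧ y / b = z / c ∧ z / c = u / d)) ∧
    (infDist K (affineSpan ℝ ({A, B} : Set (EuclideanSpace ℝ (Fin 2)))) / a =
        infDist K (affineSpan ℝ ({B, C} : Set (EuclideanSpace ℝ (Fin 2)))) / b ∧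
      infDist K (affineSpan ℝ ({B, C} : Set (EuclideanSpace ℝ (Fin 2)))) / b =
        infDist K (affineSpan ℝ ({C, D} : Set (EuclideanSpace ℝ (Fin 2)))) / c ∧
      infDist K (affineSpan ℝ ({C, D} : Set (EuclideanSpace ℝ (Fin 2)))) / c =
        infDist K (affineSpan ℝ ({D, A} : Set (EuclideanSpace ℝ (Fin 2)))) / d) :=
  stmt_17_general A B C D K O a b c d R S x y z u hABC ha hb hc hd hcirc hharm hK1 hK2 hsum
end

section
/- Let ABC be a triangle and M a point in its plane distinct from the vertices such that the perpendicular at M to line MA meets BC in A_m, the perpendicular at M to MB meets CA in B_m, and the perpendicular at M to MC meets AB in C_m. Then the points A_m, B_m, C_m are collinear (Bobillier's transversal). -/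
/-!
Let `ω` be an area form and `J` the rotation by a right angle of the plane, and measure vectors
from `M`. Perpendicularity gives `Am - M = s • J (A - M)`, and similarly for `Bm`, `Cm` with
factors `u`, `v`; collinearity of three points is the vanishing of `ω` on two difference vectors.
Since `ω (J x) (J y) = ω x y` and `ω x (J y) = ⟪x, y⟫`, the area spanned by `Am, Bm, Cm` equals
`u v [B, C, Am] + s v [C, A, Bm] + s u [A, B, Cm]` in terms of the areas of the three given
collinear triples (the inner-product terms cancel by symmetry), so it vanishes.
-/

open Module

namespace Orientation

variable {V P : Type*} [NormedAddCommGroup V] [InnerProductSpace ℝ V] [Fact (finrank ℝ V = 2)]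
  [AddTorsor V P] (o : Orientation ℝ V (Fin 2))

local notation "ω" => o.areaForm
local notation "J" => o.rightAngleRotation

theorem exists_eq_smul_of_areaForm_eq_zero {x y : V} (hx : x ≠ 0) (h : ω x y = 0) :
    ∃ t : ℝ, y = t • x := by
  refine ⟨inner ℝ x y / ‖x‖ ^ 2, ext_inner_right ℝ fun z => ?_⟩
  have key := o.inner_mul_inner_add_areaForm_mul_areaForm x y z
  rw [h, zero_mul, add_zero] at key
  rw [real_inner_smul_left, div_mul_eq_mul_div,
    eq_div_iff (pow_ne_zero 2 (norm_ne_zero_iff.2 hx))]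
  linarith

theorem exists_eq_smul_rightAngleRotation_of_inner_eq_zero {a x : V} (ha : a ≠ 0)
    (h : inner ℝ x a = 0) : ∃ s : ℝ, x = s • J a :=
  o.exists_eq_smul_of_areaForm_eq_zero (by simpa using ha)
    (by rw [← inner_rightAngleRotation_left, rightAngleRotation_rightAngleRotation,
      inner_neg_left, real_inner_comm, h, neg_zero])

theorem collinear_iff_areaForm_vsub_eq_zero {p q r : P} :
    Collinear ℝ ({p, q, r} : Set P) ↔ ω (q -ᵥ p) (r -ᵥ p) = 0 := by
  constructor
  · intro h
    obtain ⟨v, hv⟩ := (collinear_iff_of_mem (Set.mem_insert p _)).1 h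
    obtain ⟨a, rfl⟩ := hv q (by simp)
    obtain ⟨b, rfl⟩ := hv r (by simp)
    simp
  · intro h
    rcases eq_or_ne q p with rfl | hqp
    · simpa using collinear_pair ℝ q r
    obtain ⟨t, ht⟩ := o.exists_eq_smul_of_areaForm_eq_zero (vsub_ne_zero.2 hqp) h
    refine (collinear_iff_of_mem (Set.mem_insert p _)).2 ⟨q -ᵥ p, ?_⟩
    simp only [Set.mem_insert_iff, Set.mem_singleton_iff, forall_eq_or_imp, forall_eq]
    exact ⟨⟨0, by simp⟩, ⟨1, by simp⟩, ⟨t, by rw [← ht, vsub_vadd]⟩⟩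

theorem areaForm_bobillier (a b c : V) (s u v : ℝ) :
    ω (u • J b - s • J a) (v • J c - s • J a) =
      u * v * ω (c - b) (s • J a - b) + s * v * ω (a - c) (u • J b - c) +
        s * u * ω (b - a) (v • J c - a) := by
  simp only [map_sub, map_smul, LinearMap.sub_apply, LinearMap.smul_apply, smul_eq_mul,
    areaForm_rightAngleRotation_right, inner_rightAngleRotation_left, areaForm_apply_self]
  rw [o.areaForm_swap c b, o.areaForm_swap a c, o.areaForm_swap b a, real_inner_comm a b,
    real_inner_comm a c, real_inner_comm b c]
  ring

end Orientation

namespace EuclideanGeometry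

variable {V P : Type*} [NormedAddCommGroup V] [InnerProductSpace ℝ V] [AddTorsor V P]

theorem collinear_bobillier [Fact (finrank ℝ V = 2)] {A B C M Am Bm Cm : P}
    (hMA : M ≠ A) (hMB : M ≠ B) (hMC : M ≠ C)
    (hAm : Collinear ℝ ({B, C, Am} : Set P)) (hAmPerp : inner ℝ (Am -ᵥ M) (A -ᵥ M) = 0)
    (hBm : Collinear ℝ ({C, A, Bm} : Set P)) (hBmPerp : inner ℝ (Bm -ᵥ M) (B -ᵥ M) = 0)
    (hCm : Collinear ℝ ({A, B, Cm} : Set P)) (hCmPerp : inner ℝ (Cm -ᵥ M) (C -ᵥ M) = 0) :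
    Collinear ℝ ({Am, Bm, Cm} : Set P) := by
  have : FiniteDimensional ℝ V := .of_fact_finrank_eq_two
  let o : Orientation ℝ V (Fin 2) := (finBasisOfFinrankEq ℝ V Fact.out).orientation
  obtain ⟨s, hs⟩ :=
    o.exists_eq_smul_rightAngleRotation_of_inner_eq_zero (vsub_ne_zero.2 hMA.symm) hAmPerp
  obtain ⟨u, hu⟩ :=
    o.exists_eq_smul_rightAngleRotation_of_inner_eq_zero (vsub_ne_zero.2 hMB.symm) hBmPerp
  obtain ⟨v, hv⟩ :=
    o.exists_eq_smul_rightAngleRotation_of_inner_eq_zero (vsub_ne_zero.2 hMC.symm) hCmPerp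
  rw [o.collinear_iff_areaForm_vsub_eq_zero, ← vsub_sub_vsub_cancel_right C B M,
    ← vsub_sub_vsub_cancel_right Am B M, hs] at hAm
  rw [o.collinear_iff_areaForm_vsub_eq_zero, ← vsub_sub_vsub_cancel_right A C M,
    ← vsub_sub_vsub_cancel_right Bm C M, hu] at hBm
  rw [o.collinear_iff_areaForm_vsub_eq_zero, ← vsub_sub_vsub_cancel_right B A M,
    ← vsub_sub_vsub_cancel_right Cm A M, hv] at hCm
  rw [o.collinear_iff_areaForm_vsub_eq_zero, ← vsub_sub_vsub_cancel_right Bm Am M,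
    ← vsub_sub_vsub_cancel_right Cm Am M, hs, hu, hv, o.areaForm_bobillier, hAm, hBm, hCm]
  ring

end EuclideanGeometry

theorem stmt_18_general (A B C M Am Bm Cm : EuclideanSpace ℝ (Fin 2))
    (hMA : M ≠ A) (hMB : M ≠ B) (hMC : M ≠ C)
    (hAm : Collinear ℝ ({B, C, Am} : Set (EuclideanSpace ℝ (Fin 2))))
    (hAmPerp : inner (𝕜 := ℝ) (Am -ᵥ M) (A -ᵥ M) = 0)
    (hBm : Collinear ℝ ({C, A, Bm} : Set (EuclideanSpace ℝ (Fin 2))))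
    (hBmPerp : inner (𝕜 := ℝ) (Bm -ᵥ M) (B -ᵥ M) = 0)
    (hCm : Collinear ℝ ({A, B, Cm} : Set (EuclideanSpace ℝ (Fin 2))))
    (hCmPerp : inner (𝕜 := ℝ) (Cm -ᵥ M) (C -ᵥ M) = 0) :
    Collinear ℝ ({Am, Bm, Cm} : Set (EuclideanSpace ℝ (Fin 2))) :=
  haveI : Fact (finrank ℝ (EuclideanSpace ℝ (Fin 2)) = 2) := ⟨finrank_euclideanSpace_fin⟩
  EuclideanGeometry.collinear_bobillier hMA hMB hMC hAm hAmPerp hBm hBmPerp hCm hCmPerp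

/-- Bobillier's transversal: if the perpendicular at `M` to `MA` meets line `BC`
at `Am`, the perpendicular at `M` to `MB` meets line `CA` at `Bm`, and the
perpendicular at `M` to `MC` meets line `AB` at `Cm`, then `Am, Bm, Cm` are
collinear. -/
theorem stmt_18 (A B C M Am Bm Cm : EuclideanSpace ℝ (Fin 2))
    (hABC : AffineIndependent ℝ ![A, B, C])
    (hMA : M ≠ A) (hMB : M ≠ B) (hMC : M ≠ C)
    (hAmM : Am ≠ M) (hBmM : Bm ≠ M) (hCmM : Cm ≠ M)
    (hAm : Collinear ℝ ({B, C, Am} : Set (EuclideanSpace ℝ (Fin 2))))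
    (hAmPerp : inner (𝕜 := ℝ) (Am -ᵥ M) (A -ᵥ M) = 0)
    (hBm : Collinear ℝ ({C, A, Bm} : Set (EuclideanSpace ℝ (Fin 2))))
    (hBmPerp : inner (𝕜 := ℝ) (Bm -ᵥ M) (B -ᵥ M) = 0)
    (hCm : Collinear ℝ ({A, B, Cm} : Set (EuclideanSpace ℝ (Fin 2))))
    (hCmPerp : inner (𝕜 := ℝ) (Cm -ᵥ M) (C -ᵥ M) = 0) :
    Collinear ℝ ({Am, Bm, Cm} : Set (EuclideanSpace ℝ (Fin 2))) :=
  stmt_18_general A B C M Am Bm Cm hMA hMB hMC hAm hAmPerp hBm hBmPerp hCm hCmPerp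
end

section
/- In a complete quadrilateral ABCDEF (with E = AB ∩ CD, F = BC ∩ AD), the orthocenters H₁, H₂, H₃, H₄ of the four triangles ABF, AED, BCE, CDF are collinear, lying on the common radical axis of the three circles having the diagonals AC, BD, EF as diameters (Aubert's line). -/
/-!
If `H` is the orthocenter of a triangle `ABC`, the altitude conditions say that
`⟪H - A, H - B⟫ = ⟪H - B, H - C⟫ = ⟪H - C, H - A⟫ =: k`. Since `X ↦ ⟪H - A, H - X⟫` is affine,
it takes the value `k` on the whole line `BC`, and likewise for the other two sides. In a complete
quadrilateral each of the four triangles has one endpoint of every diagonal as a vertex and the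
other endpoint on the opposite side, so its orthocenter has the same power `k` with respect to
the three circles on the diagonals.

Equal powers with respect to the circles on `AC` and `BD` confine a point to a line orthogonal to
`(B - A) + (D - C)`, twice the vector joining the midpoints of `AC` and `BD`. This vector is
nonzero: otherwise `ABCD` is a parallelogram, the parallel lines `AB` and `CD` meet at `E` and so
coincide, and then `A, B, F` are collinear.
-/

open RealInnerProductSpace Module

section InnerProduct

variable {V P : Type*} [NormedAddCommGroup V] [InnerProductSpace ℝ V] [AddTorsor V P]

theorem inner_vsub_eq_of_mem_affineSpan_pair {v : V} {H X Y Z : P} {c : ℝ}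
    (hX : ⟪v, H -ᵥ X⟫ = c) (hY : ⟪v, H -ᵥ Y⟫ = c) (hZ : Z ∈ line[ℝ, X, Y]) :
    ⟪v, H -ᵥ Z⟫ = c := by
  obtain ⟨r, rfl⟩ := mem_affineSpan_pair_iff_exists_lineMap_eq.1 hZ
  rw [AffineMap.lineMap_apply, vsub_vadd_eq_vsub_sub, ← vsub_sub_vsub_cancel_left Y X H,
    inner_sub_right, inner_smul_right, inner_sub_right, hX, hY]
  ring

theorem inner_vsub_vsub_eq_of_altitudes {A B C H : P}
    (hA : ⟪H -ᵥ A, B -ᵥ C⟫ = 0) (hB : ⟪H -ᵥ B, A -ᵥ C⟫ = 0) :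
    ⟪H -ᵥ A, H -ᵥ C⟫ = ⟪H -ᵥ A, H -ᵥ B⟫ ∧ ⟪H -ᵥ B, H -ᵥ C⟫ = ⟪H -ᵥ A, H -ᵥ B⟫ := by
  rw [← vsub_sub_vsub_cancel_left B C H, inner_sub_right, sub_eq_zero] at hA
  rw [← vsub_sub_vsub_cancel_left A C H, inner_sub_right, sub_eq_zero] at hB
  exact ⟨hA, hB.trans (real_inner_comm _ _)⟩

theorem inner_vsub_vsub_eq_of_mem_sides {A B C H X Y Z : P}
    (hA : ⟪H -ᵥ A, B -ᵥ C⟫ = 0) (hB : ⟪H -ᵥ B, A -ᵥ C⟫ = 0)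
    (hX : X ∈ line[ℝ, B, C]) (hY : Y ∈ line[ℝ, A, C]) (hZ : Z ∈ line[ℝ, A, B]) :
    ⟪H -ᵥ A, H -ᵥ X⟫ = ⟪H -ᵥ A, H -ᵥ B⟫ ∧ ⟪H -ᵥ B, H -ᵥ Y⟫ = ⟪H -ᵥ A, H -ᵥ B⟫ ∧
      ⟪H -ᵥ Z, H -ᵥ C⟫ = ⟪H -ᵥ A, H -ᵥ B⟫ := by
  obtain ⟨hAC, hBC⟩ := inner_vsub_vsub_eq_of_altitudes hA hB
  refine ⟨inner_vsub_eq_of_mem_affineSpan_pair rfl hAC hX,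
    inner_vsub_eq_of_mem_affineSpan_pair (real_inner_comm _ _) hBC hY, ?_⟩
  rw [real_inner_comm]
  exact inner_vsub_eq_of_mem_affineSpan_pair ((real_inner_comm _ _).trans hAC)
    ((real_inner_comm _ _).trans hBC) hZ

theorem inner_vsub_vsub_eq_of_collinear_sides {A B C H X Y Z : P}
    (hABC : AffineIndependent ℝ ![A, B, C])
    (hA : ⟪H -ᵥ A, B -ᵥ C⟫ = 0) (hB : ⟪H -ᵥ B, A -ᵥ C⟫ = 0) (hX : Collinear ℝ {B, C, X})
    (hY : Collinear ℝ {A, C, Y}) (hZ : Collinear ℝ {A, B, Z}) :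
    ⟪H -ᵥ A, H -ᵥ X⟫ = ⟪H -ᵥ A, H -ᵥ B⟫ ∧ ⟪H -ᵥ B, H -ᵥ Y⟫ = ⟪H -ᵥ A, H -ᵥ B⟫ ∧
      ⟪H -ᵥ Z, H -ᵥ C⟫ = ⟪H -ᵥ A, H -ᵥ B⟫ := by
  have h := affineIndependent_iff_not_collinear_set.1 hABC
  exact inner_vsub_vsub_eq_of_mem_sides hA hB
    (hX.mem_affineSpan_of_mem_of_ne (by simp) (by simp) (by simp) (ne₂₃_of_not_collinear h))
    (hY.mem_affineSpan_of_mem_of_ne (by simp) (by simp) (by simp) (ne₁₃_of_not_collinear h))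
    (hZ.mem_affineSpan_of_mem_of_ne (by simp) (by simp) (by simp) (ne₁₂_of_not_collinear h))

theorem inner_vsub_vsub_add_vsub_eq_zero_of_inner_eq {A B C D X Y : P}
    (hX : ⟪X -ᵥ A, X -ᵥ C⟫ = ⟪X -ᵥ B, X -ᵥ D⟫) (hY : ⟪Y -ᵥ A, Y -ᵥ C⟫ = ⟪Y -ᵥ B, Y -ᵥ D⟫) :
    ⟪X -ᵥ Y, (B -ᵥ A) + (D -ᵥ C)⟫ = 0 := by
  rw [← vsub_sub_vsub_cancel_left B A Y, ← vsub_sub_vsub_cancel_left D C Y]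
  simp only [← vsub_add_vsub_cancel X Y A, ← vsub_add_vsub_cancel X Y B,
    ← vsub_add_vsub_cancel X Y C, ← vsub_add_vsub_cancel X Y D] at hX
  simp only [inner_add_left, inner_add_right, inner_sub_right] at hX ⊢
  linarith [real_inner_comm (X -ᵥ Y) (Y -ᵥ A), real_inner_comm (X -ᵥ Y) (Y -ᵥ B)]

theorem collinear_of_forall_inner_vsub_eq_zero (hV : finrank ℝ V = 2) {s : Set P} {u : V}
    (hu : u ≠ 0) (hs : ∀ p ∈ s, ∀ q ∈ s, ⟪p -ᵥ q, u⟫ = 0) : Collinear ℝ s := by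
  have : Fact (finrank ℝ V = 1 + 1) := ⟨hV⟩
  have : FiniteDimensional ℝ V := .of_fact_finrank_eq_succ 1
  have hperp : vectorSpan ℝ s ≤ (ℝ ∙ u)ᗮ := by
    rw [vectorSpan_def, Submodule.span_le]
    rintro _ ⟨p, hp, q, hq, rfl⟩
    exact Submodule.mem_orthogonal_singleton_iff_inner_left.2 (hs p hp q hq)
  rw [collinear_iff_finrank_le_one]
  exact (Submodule.finrank_mono hperp).trans (Submodule.finrank_orthogonal_span_singleton hu).le

end InnerProduct

section Affine

variable {k V P : Type*} [Field k] [AddCommGroup V] [Module k V] [AddTorsor V P]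

theorem vsub_add_vsub_ne_zero_of_mem_affineSpan_pair {A B C D E F : P}
    (hABF : AffineIndependent k ![A, B, F])
    (hE₁ : E ∈ line[k, A, B]) (hE₂ : E ∈ line[k, C, D]) (hF : F ∈ line[k, B, C]) :
    (B -ᵥ A) + (D -ᵥ C) ≠ 0 := by
  intro h
  have hDC : D -ᵥ C = A -ᵥ B := by
    rw [eq_neg_of_add_eq_zero_right h, neg_vsub_eq_vsub_rev]
  have hCD : line[k, C, D] = line[k, A, B] :=
    AffineSubspace.ext_of_direction_eq
      (by rw [direction_affineSpan, direction_affineSpan, vectorSpan_pair_rev, vectorSpan_pair,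
        hDC])
      ⟨E, hE₂, hE₁⟩
  have hBC : line[k, B, C] ≤ line[k, A, B] :=
    affineSpan_pair_le_of_mem_of_mem (right_mem_affineSpan_pair _ _ _)
      (hCD ▸ left_mem_affineSpan_pair _ _ _)
  exact affineIndependent_iff_not_collinear_set.1 hABF <|
    collinear_triple_of_mem_affineSpan_pair (left_mem_affineSpan_pair _ _ _)
      (right_mem_affineSpan_pair _ _ _) (hBC hF)

theorem vsub_add_vsub_ne_zero_of_collinear {A B C D E F : P}
    (hABF : AffineIndependent k ![A, B, F]) (hBCE : AffineIndependent k ![B, C, E])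
    (hCDF : AffineIndependent k ![C, D, F]) (hE₁ : Collinear k {A, B, E})
    (hE₂ : Collinear k {C, D, E}) (hF : Collinear k {B, C, F}) :
    (B -ᵥ A) + (D -ᵥ C) ≠ 0 := by
  have ne₁₂ {X Y Z : P} (h : AffineIndependent k ![X, Y, Z]) : X ≠ Y :=
    ne₁₂_of_not_collinear (affineIndependent_iff_not_collinear_set.1 h)
  exact vsub_add_vsub_ne_zero_of_mem_affineSpan_pair (E := E) hABF
    (hE₁.mem_affineSpan_of_mem_of_ne (by simp) (by simp) (by simp) (ne₁₂ hABF))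
    (hE₂.mem_affineSpan_of_mem_of_ne (by simp) (by simp) (by simp) (ne₁₂ hCDF))
    (hF.mem_affineSpan_of_mem_of_ne (by simp) (by simp) (by simp) (ne₁₂ hBCE))

end Affine

/-- Aubert's line: in a complete quadrilateral `ABCDEF` (with `E = AB ∩ CD` and
`F = BC ∩ AD`), the orthocenters `H₁, H₂, H₃, H₄` of the triangles `ABF`, `AED`,
`BCE`, `CDF` are collinear, lying on the common radical axis of the three
circles with the diagonals `AC`, `BD`, `EF` as diameters (the power of a point
`X` with respect to the circle on diameter `PQ` being `⟪X-P, X-Q⟫`). -/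
theorem stmt_19 (A B C D E F H₁ H₂ H₃ H₄ : EuclideanSpace ℝ (Fin 2))
    (hABF : AffineIndependent ℝ ![A, B, F])
    (hAED : AffineIndependent ℝ ![A, E, D])
    (hBCE : AffineIndependent ℝ ![B, C, E])
    (hCDF : AffineIndependent ℝ ![C, D, F])
    (hE1 : Collinear ℝ ({A, B, E} : Set (EuclideanSpace ℝ (Fin 2))))
    (hE2 : Collinear ℝ ({C, D, E} : Set (EuclideanSpace ℝ (Fin 2))))
    (hF1 : Collinear ℝ ({B, C, F} : Set (EuclideanSpace ℝ (Fin 2))))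
    (hF2 : Collinear ℝ ({A, D, F} : Set (EuclideanSpace ℝ (Fin 2))))
    (hH₁ : inner (𝕜 := ℝ) (H₁ -ᵥ A) (B -ᵥ F) = 0 ∧
           inner (𝕜 := ℝ) (H₁ -ᵥ B) (A -ᵥ F) = 0)
    (hH₂ : inner (𝕜 := ℝ) (H₂ -ᵥ A) (E -ᵥ D) = 0 ∧
           inner (𝕜 := ℝ) (H₂ -ᵥ E) (A -ᵥ D) = 0)
    (hH₃ : inner (𝕜 := ℝ) (H₃ -ᵥ B) (C -ᵥ E) = 0 ∧
           inner (𝕜 := ℝ) (H₃ -ᵥ C) (B -ᵥ E) = 0)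
    (hH₄ : inner (𝕜 := ℝ) (H₄ -ᵥ C) (D -ᵥ F) = 0 ∧
           inner (𝕜 := ℝ) (H₄ -ᵥ D) (C -ᵥ F) = 0) :
    Collinear ℝ ({H₁, H₂, H₃, H₄} : Set (EuclideanSpace ℝ (Fin 2))) ∧
    (∀ H ∈ ({H₁, H₂, H₃, H₄} : Set (EuclideanSpace ℝ (Fin 2))),
      inner (𝕜 := ℝ) (H -ᵥ A) (H -ᵥ C) = inner (𝕜 := ℝ) (H -ᵥ B) (H -ᵥ D) ∧
      inner (𝕜 := ℝ) (H -ᵥ B) (H -ᵥ D) = inner (𝕜 := ℝ) (H -ᵥ E) (H -ᵥ F)) := by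
  have powers : ∀ H ∈ ({H₁, H₂, H₃, H₄} : Set (EuclideanSpace ℝ (Fin 2))),
      ⟪H -ᵥ A, H -ᵥ C⟫ = ⟪H -ᵥ B, H -ᵥ D⟫ ∧ ⟪H -ᵥ B, H -ᵥ D⟫ = ⟪H -ᵥ E, H -ᵥ F⟫ := by
    rintro H (rfl | rfl | rfl | rfl)
    · obtain ⟨hC, hD, hE⟩ := inner_vsub_vsub_eq_of_collinear_sides (X := C) (Y := D)
        hABF hH₁.1 hH₁.2 (hF1.subset (by simp [Set.insert_subset_iff]))
        (hF2.subset (by simp [Set.insert_subset_iff])) hE1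
      exact ⟨hC.trans hD.symm, hD.trans hE.symm⟩
    · obtain ⟨hC, hF, hB⟩ := inner_vsub_vsub_eq_of_collinear_sides (X := C) (Z := B)
        hAED hH₂.1 hH₂.2 (hE2.subset (by simp [Set.insert_subset_iff])) hF2
        (hE1.subset (by simp [Set.insert_subset_iff]))
      exact ⟨hC.trans hB.symm, hB.trans hF.symm⟩
    · obtain ⟨hD, hA, hF⟩ := inner_vsub_vsub_eq_of_collinear_sides (X := D) (Y := A)
        hBCE hH₃.1 hH₃.2 (hE2.subset (by simp [Set.insert_subset_iff]))
        (hE1.subset (by simp [Set.insert_subset_iff])) hF1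
      exact ⟨(real_inner_comm _ _).trans (hA.trans hD.symm),
        hD.trans (hF.symm.trans (real_inner_comm _ _))⟩
    · obtain ⟨hA, hB, hE⟩ := inner_vsub_vsub_eq_of_collinear_sides (X := A) (Y := B)
        hCDF hH₄.1 hH₄.2 (hF2.subset (by simp [Set.insert_subset_iff]))
        (hF1.subset (by simp [Set.insert_subset_iff])) hE2
      exact ⟨(real_inner_comm _ _).trans ((hA.trans hB.symm).trans (real_inner_comm _ _)),
        (real_inner_comm _ _).trans (hB.trans hE.symm)⟩
  refine ⟨collinear_of_forall_inner_vsub_eq_zero finrank_euclideanSpace_fin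
    (vsub_add_vsub_ne_zero_of_collinear hABF hBCE hCDF hE1 hE2 hF1)
    fun X hX Y hY => inner_vsub_vsub_add_vsub_eq_zero_of_inner_eq (powers X hX).1 (powers Y hY).1,
    powers⟩
end
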